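/- arXiv:1301.5032 — 5 statements merged into one kernel-verified Lean document; each statement's English description precedes it below -/
import Mathlib

section
/- For p ≥ 2, let f be a unit vector in L^p(X,μ) and g a unit vector in L^{p'}(X,μ) where 1/p + 1/p' = 1, both real-valued and nonnegative. Then ∫ f g dμ ≤ 1 - ((p'-1)/4) ‖D_p(f) - g‖_{p'}^2, where D_p(f) = |f|^{p-2} f / ‖f‖_p^{p-1} is the duality map. -/
open MeasureTheory

/-- The `L^p` norm (real-valued, via explicit integral). -/
noncomputable def Lnorm {X : Type*} [MeasurableSpace X] (μ : Measure X) (p : ℝ) (f : X → ℝ) : ℝ :=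
  (∫ x, |f x| ^ p ∂μ) ^ (1 / p)

/-!
Pointwise, Young's inequality `a * b ≤ a ^ p / p + b ^ q / q` has the remainder
`(q - 1) / 2 * max c b ^ (q - 2) * (c - b) ^ 2`, `c = a ^ (p - 1)`: the Young gap is the Bregman
divergence between `c` and `b` of `t ↦ t ^ q / q`, whose second derivative is at least
`(q - 1) * max c b ^ (q - 2)` between them. Integrating with `∫ f ^ p = ∫ g ^ q = 1` bounds
`(q - 1) / 2 * ∫ w ^ (q - 2) * (D_p f - g) ^ 2` by `1 - ∫ f * g`, where `w = max (D_p f) g`.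
Since `|D_p f - g| ≤ w`, Hölder's inequality with exponents `2 / q` and `2 / (2 - q)` together
with `∫ w ^ q ≤ 2` shows that this weighted integral is at least `‖D_p f - g‖_q ^ 2 / 2`.
-/

lemma ConvexOn.add_mul_sub_le_of_hasDerivAt {S : Set ℝ} {f : ℝ → ℝ} {x y f' : ℝ}
    (hf : ConvexOn ℝ S f) (hx : x ∈ S) (hy : y ∈ S) (hd : HasDerivAt f f' x) :
    f x + f' * (y - x) ≤ f y := by
  rcases lt_trichotomy x y with hxy | rfl | hxy
  · have := hf.le_slope_of_hasDerivAt hx hy hxy hd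
    rw [slope_def_field, le_div_iff₀ (sub_pos.2 hxy)] at this
    linarith
  · simp
  · have := hf.slope_le_of_hasDerivAt hy hx hxy hd
    rw [slope_def_field, div_le_iff₀ (sub_pos.2 hxy)] at this
    linarith

theorem bregman_rpow_div_ge {q b c : ℝ} (hq1 : 1 ≤ q) (hq2 : q ≤ 2) (hb : 0 ≤ b)
    (hc : 0 ≤ c) :
    (q - 1) / 2 * (max c b ^ (q - 2) * (c - b) ^ 2) ≤
      b ^ q / q - c ^ q / q - c ^ (q - 1) * (b - c) := by
  set M := max c b
  set m := (q - 1) * M ^ (q - 2)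
  have hq0 : q ≠ 0 := by positivity
  have hderiv : ∀ t, (t ≠ 0 ∨ 1 ≤ q) →
      HasDerivAt (fun t => t ^ q / q - m / 2 * t ^ 2) (t ^ (q - 1) - m * t) t := by
    intro t ht
    refine (((Real.hasDerivAt_rpow_const ht).div_const q).sub
      (((hasDerivAt_id' t).pow 2).const_mul (m / 2))).congr_deriv ?_
    rw [mul_div_cancel_left₀ _ hq0]
    ring
  have hconv : ConvexOn ℝ (Set.Icc 0 M) (fun t => t ^ q / q - m / 2 * t ^ 2) := by
    refine convexOn_of_hasDerivWithinAt2_nonneg (f' := fun t => t ^ (q - 1) - m * t)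
      (f'' := fun t => (q - 1) * t ^ (q - 2) - m)
      (convex_Icc 0 M) (by fun_prop (disch := positivity)) ?_ ?_ ?_ <;>
      rw [interior_Icc] <;> intro t ht
    · exact (hderiv t (Or.inl ht.1.ne')).hasDerivWithinAt
    · refine HasDerivAt.hasDerivWithinAt ?_
      refine ((Real.hasDerivAt_rpow_const (p := q - 1) (Or.inl ht.1.ne')).sub
        ((hasDerivAt_id' t).const_mul m)).congr_deriv ?_
      ring_nf
    · have := Real.rpow_le_rpow_of_nonpos ht.1 ht.2.le (by linarith : q - 2 ≤ 0)
      nlinarith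
  have := hconv.add_mul_sub_le_of_hasDerivAt ⟨hc, le_max_left c b⟩ ⟨hb, le_max_right c b⟩
    (hderiv c (Or.inr hq1))
  linear_combination this

theorem young_inequality_remainder {p q a b : ℝ} (hpq : p.HolderConjugate q) (hq : q ≤ 2)
    (ha : 0 ≤ a) (hb : 0 ≤ b) :
    (q - 1) / 2 * (max (a ^ (p - 1)) b ^ (q - 2) * (a ^ (p - 1) - b) ^ 2) ≤
      a ^ p / p + b ^ q / q - a * b := by
  have hc_q : (a ^ (p - 1)) ^ q = a ^ p := by rw [← Real.rpow_mul ha, hpq.sub_one_mul_conj]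
  have hc_q1 : (a ^ (p - 1)) ^ (q - 1) = a := by
    rw [← Real.rpow_mul ha, show (p - 1) * (q - 1) = 1 by linear_combination hpq.mul_eq_add,
      Real.rpow_one]
  have hbregman := bregman_rpow_div_ge hpq.symm.lt.le hq hb (Real.rpow_nonneg ha (p - 1))
  rw [hc_q, hc_q1] at hbregman
  have ha_p : a ^ p = a ^ (p - 1) * a := by
    rw [← Real.rpow_add_one' ha (by simp [hpq.ne_zero])]
    ring_nf
  have hp_div : a ^ p / p = a ^ p - a ^ p / q := by
    have h1p : 1 / p + 1 / q = 1 := by simpa using hpq.one_div_add_one_div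
    rw [div_eq_mul_one_div, eq_sub_of_add_eq h1p]
    ring
  linarith

theorem max_rpow_sub_one_rpow_le {p q a b : ℝ} (hpq : p.HolderConjugate q) (ha : 0 ≤ a)
    (hb : 0 ≤ b) : max (a ^ (p - 1)) b ^ q ≤ a ^ p + b ^ q := by
  rw [Real.rpow_max (Real.rpow_nonneg ha _) hb hpq.symm.nonneg, ← Real.rpow_mul ha,
    hpq.sub_one_mul_conj]
  exact max_le_add_of_nonneg (Real.rpow_nonneg ha _) (Real.rpow_nonneg hb _)

theorem rpow_le_two_of_le_two {s e : ℝ} (hs0 : 0 ≤ s) (hs : s ≤ 2) (he0 : 0 ≤ e)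
    (he1 : e ≤ 1) : s ^ e ≤ 2 :=
  calc s ^ e ≤ 2 ^ e := Real.rpow_le_rpow hs0 hs he0
    _ ≤ 2 ^ (1 : ℝ) := Real.rpow_le_rpow_of_exponent_le one_le_two he1
    _ = 2 := Real.rpow_one 2

theorem abs_rpow_sub_two_mul_self {p a : ℝ} (hp : p ≠ 1) (ha : 0 ≤ a) :
    |a| ^ (p - 2) * a = a ^ (p - 1) := by
  rw [abs_of_nonneg ha, ← Real.rpow_add_one' ha (by intro h; apply hp; linarith)]
  ring_nf

theorem abs_sub_le_max_of_nonneg {R : Type*} [AddCommGroup R] [LinearOrder R]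
    [IsOrderedAddMonoid R] {a b : R} (ha : 0 ≤ a) (hb : 0 ≤ b) : |a - b| ≤ max a b :=
  abs_sub_le_iff.2 ⟨(sub_le_self a hb).trans (le_max_left a b),
    (sub_le_self b ha).trans (le_max_right a b)⟩

theorem abs_rpow_eq_rpow_mul_rpow {y w q : ℝ} (hq : 0 < q) (hyw : |y| ≤ w) :
    |y| ^ q = (w ^ (q - 2) * y ^ 2) ^ (q / 2) * (w ^ q) ^ (1 - q / 2) := by
  rcases (abs_nonneg y).trans hyw |>.eq_or_lt with rfl | hw
  · obtain rfl : y = 0 := abs_nonpos_iff.1 hyw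
    simp [Real.zero_rpow hq.ne', Real.zero_rpow (by positivity : q / 2 ≠ 0)]
  · rw [← sq_abs, Real.mul_rpow (by positivity) (by positivity), ← Real.rpow_natCast,
      ← Real.rpow_mul (abs_nonneg y), ← Real.rpow_mul hw.le, ← Real.rpow_mul hw.le,
      mul_comm (w ^ _), mul_assoc, ← Real.rpow_add hw,
      show (q - 2) * (q / 2) + q * (1 - q / 2) = 0 by ring, Nat.cast_ofNat,
      mul_div_cancel₀ q two_ne_zero, Real.rpow_zero, mul_one]

theorem rpow_sub_two_mul_sq_le {y w q : ℝ} (hyw : |y| ≤ w) : w ^ (q - 2) * y ^ 2 ≤ w ^ q := by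
  rcases (abs_nonneg y).trans hyw |>.eq_or_lt with rfl | hw
  · obtain rfl : y = 0 := abs_nonpos_iff.1 hyw
    simpa using Real.rpow_nonneg le_rfl q
  · calc w ^ (q - 2) * y ^ 2 ≤ w ^ (q - 2) * w ^ 2 := by
          rw [← sq_abs]
          gcongr
      _ = w ^ q := by rw [← Real.rpow_natCast, ← Real.rpow_add hw]; norm_num

section

variable {α : Type*} [MeasurableSpace α] {μ : Measure α}

theorem integral_rpow_mul_rpow_le {u v : α → ℝ} (hu0 : 0 ≤ᵐ[μ] u) (hv0 : 0 ≤ᵐ[μ] v)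
    (hu : Integrable u μ) (hv : Integrable v μ) {a b : ℝ} (ha : 0 ≤ a) (hb : 0 ≤ b)
    (hab : a + b = 1) :
    ∫ x, u x ^ a * v x ^ b ∂μ ≤ (∫ x, u x ∂μ) ^ a * (∫ x, v x ∂μ) ^ b := by
  have hofReal : ∀ᵐ x ∂μ, ENNReal.ofReal (u x ^ a * v x ^ b) =
      ENNReal.ofReal (u x) ^ a * ENNReal.ofReal (v x) ^ b := by
    filter_upwards [hu0, hv0] with x hux hvx
    rw [ENNReal.ofReal_mul (Real.rpow_nonneg hux a), ENNReal.ofReal_rpow_of_nonneg hux ha,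
      ENNReal.ofReal_rpow_of_nonneg hvx hb]
  rw [integral_eq_lintegral_of_nonneg_ae
    (by filter_upwards [hu0, hv0] with x hux hvx
        exact mul_nonneg (Real.rpow_nonneg hux a) (Real.rpow_nonneg hvx b))
    (by fun_prop : AEMeasurable (fun x => u x ^ a * v x ^ b) μ).aestronglyMeasurable,
    lintegral_congr_ae hofReal]
  have hIu := integral_nonneg_of_ae hu0
  have hIv := integral_nonneg_of_ae hv0
  refine ENNReal.toReal_le_of_le_ofReal
    (mul_nonneg (Real.rpow_nonneg hIu a) (Real.rpow_nonneg hIv b)) ?_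
  calc ∫⁻ x, ENNReal.ofReal (u x) ^ a * ENNReal.ofReal (v x) ^ b ∂μ
      ≤ (∫⁻ x, ENNReal.ofReal (u x) ∂μ) ^ a * (∫⁻ x, ENNReal.ofReal (v x) ∂μ) ^ b :=
        ENNReal.lintegral_mul_norm_pow_le hu.1.aemeasurable.ennreal_ofReal
          hv.1.aemeasurable.ennreal_ofReal ha hb hab
    _ = ENNReal.ofReal ((∫ x, u x ∂μ) ^ a * (∫ x, v x ∂μ) ^ b) := by
      rw [← ofReal_integral_eq_lintegral_ofReal hu hu0,
        ← ofReal_integral_eq_lintegral_ofReal hv hv0, ENNReal.ofReal_rpow_of_nonneg hIu ha,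
        ENNReal.ofReal_rpow_of_nonneg hIv hb, ENNReal.ofReal_mul (Real.rpow_nonneg hIu a)]

theorem integral_abs_rpow_rpow_two_div_le {φ w : α → ℝ} {q : ℝ} (hq0 : 0 < q)
    (hq2 : q ≤ 2) (hφ : AEMeasurable φ μ) (hw : AEMeasurable w μ)
    (hφw : ∀ x, |φ x| ≤ w x) (hwq : Integrable (fun x => w x ^ q) μ) :
    (∫ x, |φ x| ^ q ∂μ) ^ (2 / q) ≤
      (∫ x, w x ^ (q - 2) * φ x ^ 2 ∂μ) * (∫ x, w x ^ q ∂μ) ^ (2 / q - 1) := by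
  set T := ∫ x, w x ^ (q - 2) * φ x ^ 2 ∂μ
  set S := ∫ x, w x ^ q ∂μ
  have hw0 : ∀ x, 0 ≤ w x := fun x => (abs_nonneg _).trans (hφw x)
  have hT0 : ∀ x, 0 ≤ w x ^ (q - 2) * φ x ^ 2 :=
    fun x => mul_nonneg (Real.rpow_nonneg (hw0 x) _) (sq_nonneg _)
  have hT : Integrable (fun x => w x ^ (q - 2) * φ x ^ 2) μ :=
    hwq.mono' (hw.pow_const (q - 2) |>.mul (hφ.pow_const 2)).aestronglyMeasurable
      (ae_of_all _ fun x => by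
        rw [Real.norm_of_nonneg (hT0 x)]
        exact rpow_sub_two_mul_sq_le (hφw x))
  have hIT : 0 ≤ T := integral_nonneg hT0
  have hIS : 0 ≤ S := integral_nonneg fun x => Real.rpow_nonneg (hw0 x) q
  have hHolder : ∫ x, |φ x| ^ q ∂μ ≤ T ^ (q / 2) * S ^ (1 - q / 2) := by
    simp_rw [abs_rpow_eq_rpow_mul_rpow hq0 (hφw _)]
    exact integral_rpow_mul_rpow_le (ae_of_all _ hT0)
      (ae_of_all _ fun x => Real.rpow_nonneg (hw0 x) q) hT hwq (by positivity) (by linarith)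
      (by ring)
  calc (∫ x, |φ x| ^ q ∂μ) ^ (2 / q) ≤ (T ^ (q / 2) * S ^ (1 - q / 2)) ^ (2 / q) :=
        Real.rpow_le_rpow (integral_nonneg fun x => by positivity) hHolder (by positivity)
    _ = T * S ^ (2 / q - 1) := by
      rw [Real.mul_rpow (by positivity) (by positivity), ← Real.rpow_mul hIT,
        ← Real.rpow_mul hIS, show q / 2 * (2 / q) = 1 by field_simp, Real.rpow_one]
      congr 2
      field_simp

theorem MeasureTheory.MemLp.integrable_rpow_of_nonneg {f : α → ℝ} {p : ℝ}
    (hf : MemLp f (ENNReal.ofReal p) μ) (hp : 0 < p) (hf0 : ∀ x, 0 ≤ f x) :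
    Integrable (fun x => f x ^ p) μ := by
  simpa [ENNReal.toReal_ofReal hp.le, Real.norm_of_nonneg (hf0 _)] using
    hf.integrable_norm_rpow (by simpa using hp) ENNReal.ofReal_ne_top

theorem integral_young_inequality_remainder {p q : ℝ} (hpq : p.HolderConjugate q) (hq : q ≤ 2)
    {f g : α → ℝ} (hf0 : ∀ x, 0 ≤ f x) (hg0 : ∀ x, 0 ≤ g x) (hf : AEMeasurable f μ)
    (hg : AEMeasurable g μ) (hfp : Integrable (fun x => f x ^ p) μ)
    (hgq : Integrable (fun x => g x ^ q) μ) :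
    (q - 1) / 2 * ∫ x, max (f x ^ (p - 1)) (g x) ^ (q - 2) * (f x ^ (p - 1) - g x) ^ 2 ∂μ ≤
      (∫ x, f x ^ p ∂μ) / p + (∫ x, g x ^ q ∂μ) / q - ∫ x, f x * g x ∂μ := by
  have hbound : Integrable (fun x => f x ^ p / p + g x ^ q / q) μ :=
    (hfp.div_const p).add (hgq.div_const q)
  have hfg : Integrable (fun x => f x * g x) μ :=
    hbound.mono' (hf.mul hg).aestronglyMeasurable (ae_of_all _ fun x => by
      rw [Real.norm_of_nonneg (mul_nonneg (hf0 x) (hg0 x))]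
      exact Real.young_inequality_of_nonneg (hf0 x) (hg0 x) hpq)
  rw [← integral_const_mul, ← integral_div, ← integral_div,
    ← integral_add (hfp.div_const p) (hgq.div_const q), ← integral_sub hbound hfg]
  refine integral_mono_of_nonneg (ae_of_all _ fun x => ?_) (hbound.sub hfg)
    (ae_of_all _ fun x => young_inequality_remainder hpq hq (hf0 x) (hg0 x))
  exact mul_nonneg (by linarith [hpq.symm.lt]) (mul_nonneg
    (Real.rpow_nonneg ((hg0 x).trans (le_max_right _ _)) _) (sq_nonneg _))

theorem integral_rpow_eq_one_of_Lnorm_eq_one {f : α → ℝ} {p : ℝ} (hp : p ≠ 0)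
    (hf0 : ∀ x, 0 ≤ f x) (hf : Lnorm μ p f = 1) : ∫ x, f x ^ p ∂μ = 1 := by
  simp_rw [Lnorm, abs_of_nonneg (hf0 _)] at hf
  calc ∫ x, f x ^ p ∂μ = ((∫ x, f x ^ p ∂μ) ^ (1 / p)) ^ p := by
        rw [← Real.rpow_mul (integral_nonneg fun x => Real.rpow_nonneg (hf0 x) p),
          one_div_mul_cancel hp, Real.rpow_one]
    _ = 1 := by rw [hf, Real.one_rpow]

theorem Lnorm_sq (μ : Measure α) (p : ℝ) (f : α → ℝ) :
    Lnorm μ p f ^ 2 = (∫ x, |f x| ^ p ∂μ) ^ (2 / p) := by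
  rw [Lnorm, ← Real.rpow_natCast, ← Real.rpow_mul
    (integral_nonneg fun x => Real.rpow_nonneg (abs_nonneg (f x)) p)]
  ring_nf

theorem integral_mul_le_one_sub {p q : ℝ} (hpq : p.HolderConjugate q) (hq : q ≤ 2)
    {f g : α → ℝ} (hf0 : ∀ x, 0 ≤ f x) (hg0 : ∀ x, 0 ≤ g x) (hf : AEMeasurable f μ)
    (hg : AEMeasurable g μ) (hfp : Integrable (fun x => f x ^ p) μ)
    (hgq : Integrable (fun x => g x ^ q) μ) (hIf : ∫ x, f x ^ p ∂μ = 1)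
    (hIg : ∫ x, g x ^ q ∂μ = 1) :
    ∫ x, f x * g x ∂μ ≤
      1 - (q - 1) / 4 * (∫ x, |f x ^ (p - 1) - g x| ^ q ∂μ) ^ (2 / q) := by
  set w := fun x => max (f x ^ (p - 1)) (g x)
  have hw0 : ∀ x, 0 ≤ w x := fun x => (hg0 x).trans (le_max_right _ _)
  have hwq : Integrable (fun x => w x ^ q) μ :=
    (hfp.add hgq).mono' (by fun_prop : AEMeasurable (fun x => w x ^ q) μ).aestronglyMeasurable
      (ae_of_all _ fun x => by
        rw [Real.norm_of_nonneg (Real.rpow_nonneg (hw0 x) _)]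
        exact max_rpow_sub_one_rpow_le hpq (hf0 x) (hg0 x))
  have hS : (∫ x, w x ^ q ∂μ) ^ (2 / q - 1) ≤ 2 := by
    refine rpow_le_two_of_le_two (integral_nonneg fun x => Real.rpow_nonneg (hw0 x) _) ?_ ?_ ?_
    · have : ∫ x, w x ^ q ∂μ ≤ ∫ x, (f x ^ p + g x ^ q) ∂μ :=
        integral_mono hwq (hfp.add hgq) fun x => max_rpow_sub_one_rpow_le hpq (hf0 x) (hg0 x)
      rwa [integral_add hfp hgq, hIf, hIg, one_add_one_eq_two] at this
    · rw [sub_nonneg, le_div_iff₀ hpq.symm.pos]; linarith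
    · rw [sub_le_iff_le_add, div_le_iff₀ hpq.symm.pos]; linarith [hpq.symm.lt]
  have hHolder := integral_abs_rpow_rpow_two_div_le (φ := fun x => f x ^ (p - 1) - g x) (w := w)
    hpq.symm.pos hq (by fun_prop) (by fun_prop)
    (fun x => abs_sub_le_max_of_nonneg (Real.rpow_nonneg (hf0 x) _) (hg0 x)) hwq
  have hYoung : (q - 1) / 2 * ∫ x, w x ^ (q - 2) * (f x ^ (p - 1) - g x) ^ 2 ∂μ ≤
      1 - ∫ x, f x * g x ∂μ := by
    simpa only [hIf, hIg, ← one_div, hpq.one_div_add_one_div, div_one] using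
      integral_young_inequality_remainder hpq hq hf0 hg0 hf hg hfp hgq
  have hT0 : 0 ≤ ∫ x, w x ^ (q - 2) * (f x ^ (p - 1) - g x) ^ 2 ∂μ :=
    integral_nonneg fun x => mul_nonneg (Real.rpow_nonneg (hw0 x) _) (sq_nonneg _)
  have hJ := hHolder.trans ((mul_le_mul_of_nonneg_left hS hT0).trans_eq (mul_comm _ 2))
  linarith [mul_le_mul_of_nonneg_left hJ (by linarith [hpq.symm.lt] : 0 ≤ (q - 1) / 4)]

end

/-- Hölder's inequality with remainder (eq. (main1)), for nonnegative real functions: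
for `p ≥ 2`, unit vectors `f ∈ L^p`, `g ∈ L^{p'}`,
`∫ f g ≤ 1 - ((p'-1)/4) ‖D_p(f) - g‖_{p'}^2`, where `D_p(f) = |f|^{p-2} f` since `‖f‖_p = 1`. -/
theorem stmt0 {X : Type*} [MeasurableSpace X] (μ : Measure X) (p p' : ℝ)
    (hp : 2 ≤ p) (hpp' : 1 / p + 1 / p' = 1)
    (f g : X → ℝ) (hf0 : ∀ x, 0 ≤ f x) (hg0 : ∀ x, 0 ≤ g x)
    (hf : MemLp f (ENNReal.ofReal p) μ) (hg : MemLp g (ENNReal.ofReal p') μ)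
    (hfn : Lnorm μ p f = 1) (hgn : Lnorm μ p' g = 1) :
    ∫ x, f x * g x ∂μ ≤
      1 - (p' - 1) / 4 * (Lnorm μ p' (fun x => |f x| ^ (p - 2) * f x - g x)) ^ 2 := by
  have hpq : p.HolderConjugate p' :=
    Real.holderConjugate_iff.2 ⟨by linarith, by simpa only [one_div] using hpp'⟩
  have hq : p' ≤ 2 := by
    rw [hpq.conjugate_eq, div_le_iff₀ hpq.sub_one_pos]; linarith
  have hD : ∀ x, |f x| ^ (p - 2) * f x = f x ^ (p - 1) :=
    fun x => abs_rpow_sub_two_mul_self (by linarith) (hf0 x)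
  simp only [Lnorm_sq, hD]
  exact integral_mul_le_one_sub hpq hq hf0 hg0 hf.1.aemeasurable hg.1.aemeasurable
    (hf.integrable_rpow_of_nonneg hpq.pos hf0) (hg.integrable_rpow_of_nonneg hpq.symm.pos hg0)
    (integral_rpow_eq_one_of_Lnorm_eq_one hpq.ne_zero hf0 hfn)
    (integral_rpow_eq_one_of_Lnorm_eq_one hpq.symm.ne_zero hg0 hgn)
end

section
/- For q ≥ 4 and nonzero f, g ∈ L^q(X,μ), one has max{‖f‖_q, ‖g‖_q} · ‖ |f|^{q-2}/‖f‖_q^{q-2} − |g|^{q-2}/‖g‖_q^{q-2} ‖_{q/(q-2)} ≤ 4(q-2)‖f − g‖_q. -/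
open MeasureTheory

/-!
With `s = q - 2`, `F = ‖f‖_q ≥ G = ‖g‖_q` and `D = ‖f - g‖_q`, split
`|f|^s / F^s - |g|^s / G^s = (|f|^s - |g|^s) / F^s + (F^{-s} - G^{-s}) |g|^s`.
Convexity of `t ↦ t^s` gives `a^s - b^s ≤ s a^{s-1} (a - b)` for `b ≤ a`, hence
`||f|^s - |g|^s| ≤ s (|f|^{s-1} + |g|^{s-1}) |f - g|`, and Hölder with `(s-1)/q + 1/q = s/q`
bounds the `L^{q/s}` norm of the first term by `s (F^{s-1} + G^{s-1}) D / F^s ≤ 2 s D / F`.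
The second term has norm `(F^s - G^s) / F^s ≤ s (F - G) / F ≤ s D / F`, by the same convexity
bound and the reverse triangle inequality. So `F ‖…‖_{q/s} ≤ 3 s D`.
-/

lemma rpow_sub_rpow_le_mul_sub {a b s : ℝ} (hb : 0 ≤ b) (hba : b ≤ a) (hs : 1 ≤ s) :
    a ^ s - b ^ s ≤ s * a ^ (s - 1) * (a - b) := by
  rcases hba.eq_or_lt with rfl | hlt
  · simp
  have hslope := (convexOn_rpow hs).slope_le_of_hasDerivAt (Set.mem_Ici.2 hb)
    (Set.mem_Ici.2 (hb.trans hlt.le)) hlt (Real.hasDerivAt_rpow_const (Or.inr hs))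
  rwa [slope_def_field, div_le_iff₀ (sub_pos.2 hlt)] at hslope

lemma abs_rpow_sub_rpow_le {a b s : ℝ} (ha : 0 ≤ a) (hb : 0 ≤ b) (hs : 1 ≤ s) :
    |a ^ s - b ^ s| ≤ s * (a ^ (s - 1) + b ^ (s - 1)) * |a - b| := by
  wlog hba : b ≤ a generalizing a b
  · rw [abs_sub_comm, abs_sub_comm a, add_comm]
    exact this hb ha (le_of_not_ge hba)
  rw [abs_of_nonneg (sub_nonneg.2 (Real.rpow_le_rpow hb hba (by linarith))),
    abs_of_nonneg (sub_nonneg.2 hba)]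
  calc a ^ s - b ^ s ≤ s * a ^ (s - 1) * (a - b) := rpow_sub_rpow_le_mul_sub hb hba hs
    _ ≤ s * (a ^ (s - 1) + b ^ (s - 1)) * (a - b) := by
      have : 0 ≤ b ^ (s - 1) := Real.rpow_nonneg hb _
      gcongr
      linarith

lemma Real.holderTriple_div_sub_one {q s : ℝ} (hq : 0 < q) (hs : 1 < s) :
    (q / (s - 1)).HolderTriple q (q / s) where
  inv_add_inv_eq_inv := by
    rw [inv_div, inv_div]
    field_simp
    ring
  left_pos := div_pos hq (sub_pos.2 hs)
  right_pos := hq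

section Lnorm

variable {X : Type*} [MeasurableSpace X] {μ : Measure X}

lemma MeasureTheory.MemLp.abs_rpow {p r : ℝ} {w : X → ℝ} (hw : MemLp w (ENNReal.ofReal p) μ)
    (hr : 0 < r) :
    MemLp (fun x => |w x| ^ r) (ENNReal.ofReal (p / r)) μ := by
  have h := hw.norm_rpow_div (ENNReal.ofReal r)
  rw [← ENNReal.ofReal_div_of_pos hr] at h
  simpa [ENNReal.toReal_ofReal hr.le, Real.norm_eq_abs] using h

lemma Lnorm_nonneg (p : ℝ) (w : X → ℝ) : 0 ≤ Lnorm μ p w :=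
  Real.rpow_nonneg (integral_nonneg fun _ => by positivity) _

lemma Lnorm_sub_comm (p : ℝ) (u v : X → ℝ) :
    Lnorm μ p (fun x => u x - v x) = Lnorm μ p (fun x => v x - u x) := by
  simp only [Lnorm, abs_sub_comm]

lemma Lnorm_const_mul {p : ℝ} (hp : 0 < p) (c : ℝ) (w : X → ℝ) :
    Lnorm μ p (fun x => c * w x) = |c| * Lnorm μ p w := by
  simp only [Lnorm, abs_mul, Real.mul_rpow (abs_nonneg _) (abs_nonneg _), integral_const_mul]
  rw [Real.mul_rpow (by positivity) (integral_nonneg fun _ => by positivity),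
    ← Real.rpow_mul (abs_nonneg c), mul_one_div_cancel hp.ne', Real.rpow_one]

lemma Lnorm_abs_rpow {p s : ℝ} (hs : 0 < s) (w : X → ℝ) :
    Lnorm μ (p / s) (fun x => |w x| ^ s) = Lnorm μ p w ^ s := by
  simp only [Lnorm, abs_of_nonneg (Real.rpow_nonneg (abs_nonneg _) _),
    ← Real.rpow_mul (abs_nonneg _), mul_div_cancel₀ _ hs.ne']
  rw [← Real.rpow_mul (integral_nonneg fun _ => by positivity), one_div_div, one_div_mul_eq_div]

lemma Lnorm_mono {p : ℝ} (hp : 0 < p) {u v : X → ℝ} (hv : MemLp v (ENNReal.ofReal p) μ)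
    (huv : ∀ x, |u x| ≤ |v x|) : Lnorm μ p u ≤ Lnorm μ p v := by
  have hint := hv.integrable_norm_rpow (by simpa using hp) ENNReal.ofReal_ne_top
  simp only [ENNReal.toReal_ofReal hp.le, Real.norm_eq_abs] at hint
  refine Real.rpow_le_rpow (integral_nonneg fun _ => by positivity)
    (integral_mono_of_nonneg (.of_forall fun _ => by positivity) hint
      (.of_forall fun x => Real.rpow_le_rpow (abs_nonneg _) (huv x) hp.le)) (by positivity)

lemma Lnorm_eq_toReal_eLpNorm {p : ℝ} (hp : 0 < p) {w : X → ℝ}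
    (hw : MemLp w (ENNReal.ofReal p) μ) :
    Lnorm μ p w = (eLpNorm w (ENNReal.ofReal p) μ).toReal := by
  rw [hw.eLpNorm_eq_integral_rpow_norm (by simp [hp]) ENNReal.ofReal_ne_top,
    ENNReal.toReal_ofReal (Real.rpow_nonneg (integral_nonneg fun x => by positivity) _)]
  simp only [Lnorm, ENNReal.toReal_ofReal hp.le, Real.norm_eq_abs, one_div]

lemma Lnorm_add_le {p : ℝ} (hp : 1 ≤ p) {u v : X → ℝ} (hu : MemLp u (ENNReal.ofReal p) μ)
    (hv : MemLp v (ENNReal.ofReal p) μ) :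
    Lnorm μ p (fun x => u x + v x) ≤ Lnorm μ p u + Lnorm μ p v := by
  have hp0 : 0 < p := by linarith
  rw [Lnorm_eq_toReal_eLpNorm (w := fun x => u x + v x) hp0 (hu.add hv),
    Lnorm_eq_toReal_eLpNorm hp0 hu, Lnorm_eq_toReal_eLpNorm hp0 hv]
  exact ENNReal.toReal_le_add (eLpNorm_add_le hu.1 hv.1 (ENNReal.one_le_ofReal.2 hp))
    hu.eLpNorm_ne_top hv.eLpNorm_ne_top

lemma Lnorm_sub_Lnorm_le {p : ℝ} (hp : 1 ≤ p) {u v : X → ℝ}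
    (hu : MemLp u (ENNReal.ofReal p) μ) (hv : MemLp v (ENNReal.ofReal p) μ) :
    Lnorm μ p u - Lnorm μ p v ≤ Lnorm μ p (fun x => u x - v x) := by
  have h := Lnorm_add_le hp (u := fun x => u x - v x) (hu.sub hv) hv
  simp only [sub_add_cancel] at h
  linarith

lemma Lnorm_mul_le {p₁ p₂ r : ℝ} (h : p₁.HolderTriple p₂ r) {u v : X → ℝ}
    (hu : MemLp u (ENNReal.ofReal p₁) μ) (hv : MemLp v (ENNReal.ofReal p₂) μ) :
    Lnorm μ r (fun x => u x * v x) ≤ Lnorm μ p₁ u * Lnorm μ p₂ v := by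
  have := h.ennrealOfReal
  rw [Lnorm_eq_toReal_eLpNorm (w := fun x => u x * v x) h.pos' (hv.mul' hu),
    Lnorm_eq_toReal_eLpNorm h.pos hu, Lnorm_eq_toReal_eLpNorm h.symm.pos hv, ← ENNReal.toReal_mul]
  exact ENNReal.toReal_mono (ENNReal.mul_ne_top hu.eLpNorm_ne_top hv.eLpNorm_ne_top)
    (eLpNorm_smul_le_mul_eLpNorm (φ := u) hv.1 hu.1)

variable {q s : ℝ} {f g : X → ℝ}

lemma Lnorm_abs_rpow_sub_one_mul_le (hq : 0 < q) (hs : 1 < s) {w d : X → ℝ}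
    (hw : MemLp w (ENNReal.ofReal q) μ) (hd : MemLp d (ENNReal.ofReal q) μ) :
    Lnorm μ (q / s) (fun x => |w x| ^ (s - 1) * d x) ≤
      Lnorm μ q w ^ (s - 1) * Lnorm μ q d := by
  rw [← Lnorm_abs_rpow (sub_pos.2 hs)]
  exact Lnorm_mul_le (Real.holderTriple_div_sub_one hq hs) (hw.abs_rpow (sub_pos.2 hs)) hd

lemma memLp_abs_rpow_sub_one_mul (hq : 0 < q) (hs : 1 < s) {w d : X → ℝ}
    (hw : MemLp w (ENNReal.ofReal q) μ) (hd : MemLp d (ENNReal.ofReal q) μ) :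
    MemLp (fun x => |w x| ^ (s - 1) * d x) (ENNReal.ofReal (q / s)) μ := by
  have := (Real.holderTriple_div_sub_one hq hs).ennrealOfReal
  exact hd.mul' (hw.abs_rpow (sub_pos.2 hs))

lemma Lnorm_abs_rpow_sub_abs_rpow_le (hs : 1 < s) (hsq : s ≤ q)
    (hf : MemLp f (ENNReal.ofReal q) μ) (hg : MemLp g (ENNReal.ofReal q) μ) :
    Lnorm μ (q / s) (fun x => |f x| ^ s - |g x| ^ s) ≤
      s * (Lnorm μ q f ^ (s - 1) + Lnorm μ q g ^ (s - 1)) * Lnorm μ q (fun x => f x - g x) := by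
  have hq : 0 < q := by linarith
  have hs0 : 0 < s := by linarith
  have hqs : 1 ≤ q / s := (one_le_div hs0).2 hsq
  have hd : MemLp (fun x => f x - g x) (ENNReal.ofReal q) μ := hf.sub hg
  have hfd := memLp_abs_rpow_sub_one_mul hq hs hf hd
  have hgd := memLp_abs_rpow_sub_one_mul hq hs hg hd
  have hpointwise : ∀ x, |(|f x| ^ s - |g x| ^ s)| ≤
      |s * (|f x| ^ (s - 1) * (f x - g x) + |g x| ^ (s - 1) * (f x - g x))| := by
    intro x
    have hsum : 0 ≤ |f x| ^ (s - 1) + |g x| ^ (s - 1) := by positivity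
    rw [← add_mul, abs_mul, abs_mul, abs_of_pos hs0, ← mul_assoc, abs_of_nonneg hsum]
    calc |(|f x| ^ s - |g x| ^ s)|
        ≤ s * (|f x| ^ (s - 1) + |g x| ^ (s - 1)) * |(|f x| - |g x|)| :=
          abs_rpow_sub_rpow_le (abs_nonneg _) (abs_nonneg _) hs.le
      _ ≤ s * (|f x| ^ (s - 1) + |g x| ^ (s - 1)) * |f x - g x| :=
          mul_le_mul_of_nonneg_left (abs_abs_sub_abs_le_abs_sub _ _) (by positivity)
  calc Lnorm μ (q / s) (fun x => |f x| ^ s - |g x| ^ s)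
      ≤ Lnorm μ (q / s)
          (fun x => s * (|f x| ^ (s - 1) * (f x - g x) + |g x| ^ (s - 1) * (f x - g x))) :=
        Lnorm_mono (by positivity) ((hfd.add hgd).const_mul s) hpointwise
    _ = s * Lnorm μ (q / s)
          (fun x => |f x| ^ (s - 1) * (f x - g x) + |g x| ^ (s - 1) * (f x - g x)) := by
        rw [Lnorm_const_mul (by positivity), abs_of_pos hs0]
    _ ≤ s * (Lnorm μ q f ^ (s - 1) * Lnorm μ q (fun x => f x - g x) +
          Lnorm μ q g ^ (s - 1) * Lnorm μ q (fun x => f x - g x)) := by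
        gcongr
        exact (Lnorm_add_le hqs hfd hgd).trans (add_le_add
          (Lnorm_abs_rpow_sub_one_mul_le hq hs hf hd) (Lnorm_abs_rpow_sub_one_mul_le hq hs hg hd))
    _ = _ := by ring

lemma mul_Lnorm_normalized_rpow_sub_le (hs : 1 < s) (hsq : s ≤ q)
    (hf : MemLp f (ENNReal.ofReal q) μ) (hg : MemLp g (ENNReal.ofReal q) μ)
    (hgn : 0 < Lnorm μ q g) (hGF : Lnorm μ q g ≤ Lnorm μ q f) :
    Lnorm μ q f * Lnorm μ (q / s)
        (fun x => |f x| ^ s / Lnorm μ q f ^ s - |g x| ^ s / Lnorm μ q g ^ s) ≤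
      3 * s * Lnorm μ q (fun x => f x - g x) := by
  set F := Lnorm μ q f
  set G := Lnorm μ q g
  set D := Lnorm μ q (fun x => f x - g x)
  have hq : 0 < q := by linarith
  have hs0 : 0 < s := by linarith
  have hqs : 1 ≤ q / s := (one_le_div hs0).2 hsq
  have hFpos : 0 < F := hgn.trans_le hGF
  have hGsFs : G ^ s ≤ F ^ s := Real.rpow_le_rpow hgn.le hGF hs0.le
  have hFs : F ^ s = F ^ (s - 1) * F := by rw [← Real.rpow_add_one hFpos.ne', sub_add_cancel]
  have hsplit : (fun x => |f x| ^ s / F ^ s - |g x| ^ s / G ^ s) = fun x =>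
      (F ^ s)⁻¹ * (|f x| ^ s - |g x| ^ s) + ((F ^ s)⁻¹ - (G ^ s)⁻¹) * |g x| ^ s := by
    funext x
    field_simp
    ring
  have hfs := hf.abs_rpow hs0
  have hgs := hg.abs_rpow hs0
  have htriangle : Lnorm μ (q / s) (fun x => |f x| ^ s / F ^ s - |g x| ^ s / G ^ s) ≤
      (F ^ s)⁻¹ * Lnorm μ (q / s) (fun x => |f x| ^ s - |g x| ^ s) +
        ((G ^ s)⁻¹ - (F ^ s)⁻¹) * G ^ s := by
    rw [hsplit]
    refine (Lnorm_add_le hqs ((hfs.sub hgs).const_mul _) (hgs.const_mul _)).trans_eq ?_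
    rw [Lnorm_const_mul (by positivity), Lnorm_const_mul (by positivity), Lnorm_abs_rpow hs0,
      abs_of_pos (by positivity), abs_of_nonpos (sub_nonpos.2 (inv_anti₀ (by positivity) hGsFs)),
      neg_sub]
    rfl
  have hdiff := Lnorm_abs_rpow_sub_abs_rpow_le hs hsq hf hg
  have hreverse : F - G ≤ D := Lnorm_sub_Lnorm_le (by linarith) hf hg
  have htangent : F ^ s - G ^ s ≤ s * F ^ (s - 1) * D :=
    (rpow_sub_rpow_le_mul_sub hgn.le hGF hs.le).trans (by gcongr)
  have hD : 0 ≤ D := Lnorm_nonneg q _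
  have hratio : G ^ (s - 1) / F ^ (s - 1) ≤ 1 :=
    div_le_one_of_le₀ (Real.rpow_le_rpow hgn.le hGF (by linarith)) (by positivity)
  have hgap : (F ^ s - G ^ s) / F ^ (s - 1) ≤ s * D := by
    rw [div_le_iff₀ (by positivity)]
    linarith
  calc F * Lnorm μ (q / s) (fun x => |f x| ^ s / F ^ s - |g x| ^ s / G ^ s)
      ≤ F * ((F ^ s)⁻¹ * (s * (F ^ (s - 1) + G ^ (s - 1)) * D) +
          ((G ^ s)⁻¹ - (F ^ s)⁻¹) * G ^ s) := by
        gcongr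
        exact htriangle.trans (by gcongr)
    _ = s * (1 + G ^ (s - 1) / F ^ (s - 1)) * D + (F ^ s - G ^ s) / F ^ (s - 1) := by
        rw [hFs]
        field_simp
    _ ≤ s * (1 + 1) * D + s * D := by gcongr
    _ = 3 * s * D := by ring

end Lnorm

/-- Eq. (bqest): for `q ≥ 4` and nonzero `f, g ∈ L^q`,
`max{‖f‖_q, ‖g‖_q} ‖ |f|^{q-2}/‖f‖_q^{q-2} − |g|^{q-2}/‖g‖_q^{q-2} ‖_{q/(q-2)}
  ≤ 4(q-2) ‖f − g‖_q`. -/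
theorem stmt8 {X : Type*} [MeasurableSpace X] (μ : Measure X) (q : ℝ)
    (hq : 4 ≤ q) (f g : X → ℝ)
    (hf : MemLp f (ENNReal.ofReal q) μ) (hg : MemLp g (ENNReal.ofReal q) μ)
    (hfn : 0 < Lnorm μ q f) (hgn : 0 < Lnorm μ q g) :
    max (Lnorm μ q f) (Lnorm μ q g) *
      Lnorm μ (q / (q - 2))
        (fun x => |f x| ^ (q - 2) / (Lnorm μ q f) ^ (q - 2)
                 - |g x| ^ (q - 2) / (Lnorm μ q g) ^ (q - 2)) ≤
      4 * (q - 2) * Lnorm μ q (fun x => f x - g x) := by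
  have hs : 1 < q - 2 := by linarith
  have hsq : q - 2 ≤ q := by linarith
  wlog hGF : Lnorm μ q g ≤ Lnorm μ q f generalizing f g
  · have h := this g f hg hf hgn hfn (le_of_not_ge hGF)
    rwa [max_comm, Lnorm_sub_comm (q / (q - 2)), Lnorm_sub_comm q] at h
  rw [max_eq_left hGF]
  calc _ ≤ 3 * (q - 2) * Lnorm μ q (fun x => f x - g x) :=
        mul_Lnorm_normalized_rpow_sub_le hs hsq hf hg hgn hGF
    _ ≤ 4 * (q - 2) * Lnorm μ q (fun x => f x - g x) := by
        gcongr
        · exact Lnorm_nonneg q _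
        · norm_num
end

section
/- Let 2 < q < 4 and set p' = q/2. Let U ≥ 0 with ‖U‖_{q/(q-2)} = 1 and ψ ∈ L^q nonzero. Define H[ψ,U] = ‖ψ‖_q² − ∫ U ψ² dμ. Then H[ψ,U] ≥ ((q-2)/8) ‖ψ‖_q² ‖ |ψ|²/‖ψ‖_q² − U^{2/(q-2)} ‖_{q/2}². -/
open MeasureTheory

/-!
Put `p = q/2`, `f = ψ²/‖ψ‖_q²` and `h = U^{2/(q-2)}`. Then `f, h ≥ 0`, `∫ f^p = ∫ h^p = 1` and
`h^{p-1} = U`, so `H[ψ,U]/‖ψ‖_q² = 1 - ∫ f h^{p-1}` is the integral of the Bregman divergence of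
`t ↦ t^p/p` between `f` and `h`. Between `f` and `h` the second derivative `(p-1) t^{p-2}` is at
least `(p-1) (f+h)^{p-2}` because `p ≤ 2`, so the divergence dominates
`(p-1)/2 · (f-h)² (f+h)^{p-2}`. Since `|f-h|^p = ((f-h)² (f+h)^{p-2})^{p/2} ((f+h)^p)^{1-p/2}`,
Hölder's inequality together with `∫ (f+h)^p ≤ 2^p` gives `‖f-h‖_p² ≤ 2 ∫ (f-h)² (f+h)^{p-2}`.
-/

open Real Set

theorem integral_const_sub_id {a b : ℝ} : ∫ t in b..a, (a - t) = (a - b) ^ 2 / 2 := by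
  rw [intervalIntegral.integral_comp_sub_left (fun t => t), sub_self, integral_id]; ring

theorem mul_sq_div_two_le_integral_sub_mul {k : ℝ → ℝ} {a b c : ℝ}
    (hk : IntervalIntegrable k volume b a) (hc : ∀ t ∈ uIoo b a, c ≤ k t) :
    c * (a - b) ^ 2 / 2 ≤ ∫ t in b..a, (a - t) * k t := by
  have hlin : ContinuousOn (fun t => a - t) (uIcc b a) := by fun_prop
  have hlin_int : ∀ u v, IntervalIntegrable (fun t => (a - t) * c) volume u v := fun u v =>
    (continuous_const.sub continuous_id |>.mul continuous_const).intervalIntegrable u v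
  have hmean : c * (a - b) ^ 2 / 2 = ∫ t in b..a, (a - t) * c := by
    rw [intervalIntegral.integral_mul_const, integral_const_sub_id]; ring
  rcases le_total b a with hba | hab
  · rw [hmean]
    refine intervalIntegral.integral_mono_on_of_le_Ioo hba (hlin_int b a)
      (hk.continuousOn_mul hlin) fun t ht => ?_
    exact mul_le_mul_of_nonneg_left (hc t (by simpa [uIoo, hba] using ht)) (by linarith [ht.2])
  · rw [hmean, intervalIntegral.integral_symm a b, intervalIntegral.integral_symm a b,
      neg_le_neg_iff]
    refine intervalIntegral.integral_mono_on_of_le_Ioo hab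
      (hk.symm.continuousOn_mul (uIcc_comm b a ▸ hlin)) (hlin_int a b) fun t ht => ?_
    exact mul_le_mul_of_nonpos_left (hc t (by simpa [uIoo, hab] using ht)) (by linarith [ht.1])

/-- The Bregman divergence `φ a - φ b - φ' b (a - b)` of `φ t = t ^ p / p`. -/
noncomputable def rpowBregman (p a b : ℝ) : ℝ := a ^ p / p + (p - 1) / p * b ^ p - a * b ^ (p - 1)

theorem rpowBregman_eq_integral {p a b : ℝ} (hp : 1 < p) (ha : 0 ≤ a) (hb : 0 ≤ b) :
    rpowBregman p a b = ∫ t in b..a, (a - t) * ((p - 1) * t ^ (p - 2)) := by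
  have hpow_succ : a ^ p = a * a ^ (p - 1) := by
    rw [← rpow_one_add' ha (by linarith), add_sub_cancel]
  calc rpowBregman p a b
      = (p - 1) * a * (∫ t in b..a, t ^ (p - 2)) - (p - 1) * ∫ t in b..a, t ^ (p - 1) := by
        rw [integral_rpow (Or.inl (by linarith)), integral_rpow (Or.inl (by linarith)),
          show p - 2 + 1 = p - 1 by ring, sub_add_cancel, rpowBregman, hpow_succ]
        have : p - 1 ≠ 0 := by linarith
        field_simp
        ring
    _ = ∫ t in b..a, ((p - 1) * a * t ^ (p - 2) - (p - 1) * t ^ (p - 1)) := by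
        rw [intervalIntegral.integral_sub
          ((intervalIntegral.intervalIntegrable_rpow' (by linarith)).const_mul _)
          ((intervalIntegral.intervalIntegrable_rpow' (by linarith)).const_mul _),
          intervalIntegral.integral_const_mul,
          intervalIntegral.integral_const_mul]
    _ = ∫ t in b..a, (a - t) * ((p - 1) * t ^ (p - 2)) := by
        refine intervalIntegral.integral_congr fun t ht => ?_
        have ht0 : 0 ≤ t := le_trans (le_min hb ha) ht.1
        rw [show p - 1 = 1 + (p - 2) by ring, rpow_add' ht0 (by linarith), rpow_one]
        ring

theorem mul_sq_mul_rpow_le_rpowBregman {p a b : ℝ} (hp1 : 1 < p) (hp2 : p ≤ 2)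
    (ha : 0 ≤ a) (hb : 0 ≤ b) :
    (p - 1) / 2 * ((a - b) ^ 2 * (a + b) ^ (p - 2)) ≤ rpowBregman p a b := by
  have hc : ∀ t ∈ uIoo b a, (p - 1) * (a + b) ^ (p - 2) ≤ (p - 1) * t ^ (p - 2) := by
    intro t ht
    have ht0 : 0 < t := lt_of_le_of_lt (le_min hb ha) ht.1
    have hta : t ≤ a + b := ht.2.le.trans (max_le (by linarith) (by linarith))
    exact mul_le_mul_of_nonneg_left (rpow_le_rpow_of_nonpos ht0 hta (by linarith)) (by linarith)
  calc (p - 1) / 2 * ((a - b) ^ 2 * (a + b) ^ (p - 2))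
      = (p - 1) * (a + b) ^ (p - 2) * (a - b) ^ 2 / 2 := by ring
    _ ≤ rpowBregman p a b := by
      rw [rpowBregman_eq_integral hp1 ha hb]
      exact mul_sq_div_two_le_integral_sub_mul
        ((intervalIntegral.intervalIntegrable_rpow' (by linarith)).const_mul _) hc

theorem integral_rpow_mul_rpow_le_s10 {X : Type*} [MeasurableSpace X] {μ : Measure X} {F G : X → ℝ}
    (hF0 : 0 ≤ F) (hG0 : 0 ≤ G) (hF : Integrable F μ) (hG : Integrable G μ)
    {θ : ℝ} (hθ0 : 0 ≤ θ) (hθ1 : θ ≤ 1) :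
    ∫ x, F x ^ θ * G x ^ (1 - θ) ∂μ ≤ (∫ x, F x ∂μ) ^ θ * (∫ x, G x ∂μ) ^ (1 - θ) := by
  have hθ1' : 0 ≤ 1 - θ := by linarith
  have hmeas : AEStronglyMeasurable (fun x => F x ^ θ * G x ^ (1 - θ)) μ :=
    ((hF.1.aemeasurable.pow_const θ).mul (hG.1.aemeasurable.pow_const _)).aestronglyMeasurable
  have hFG0 : ∀ x, 0 ≤ F x ^ θ * G x ^ (1 - θ) := fun x =>
    mul_nonneg (rpow_nonneg (hF0 x) _) (rpow_nonneg (hG0 x) _)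
  have hIF := integral_nonneg (μ := μ) hF0
  have hIG := integral_nonneg (μ := μ) hG0
  rw [integral_eq_lintegral_of_nonneg_ae (ae_of_all _ hFG0) hmeas]
  refine ENNReal.toReal_le_of_le_ofReal (by positivity) ?_
  calc ∫⁻ x, ENNReal.ofReal (F x ^ θ * G x ^ (1 - θ)) ∂μ
      = ∫⁻ x, ENNReal.ofReal (F x) ^ θ * ENNReal.ofReal (G x) ^ (1 - θ) ∂μ := by
        congr 1 with x
        rw [ENNReal.ofReal_mul (rpow_nonneg (hF0 x) _), ENNReal.ofReal_rpow_of_nonneg (hF0 x) hθ0,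
          ENNReal.ofReal_rpow_of_nonneg (hG0 x) hθ1']
    _ ≤ (∫⁻ x, ENNReal.ofReal (F x) ∂μ) ^ θ * (∫⁻ x, ENNReal.ofReal (G x) ∂μ) ^ (1 - θ) :=
        ENNReal.lintegral_mul_norm_pow_le hF.1.aemeasurable.ennreal_ofReal
          hG.1.aemeasurable.ennreal_ofReal hθ0 hθ1' (by ring)
    _ = ENNReal.ofReal ((∫ x, F x ∂μ) ^ θ * (∫ x, G x ∂μ) ^ (1 - θ)) := by
        rw [← ofReal_integral_eq_lintegral_ofReal hF (ae_of_all _ hF0),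
          ← ofReal_integral_eq_lintegral_ofReal hG (ae_of_all _ hG0),
          ENNReal.ofReal_mul (by positivity), ENNReal.ofReal_rpow_of_nonneg hIF hθ0,
          ENNReal.ofReal_rpow_of_nonneg hIG hθ1']

theorem add_rpow_le_two_rpow_mul {p a b : ℝ} (hp : 1 ≤ p) (ha : 0 ≤ a) (hb : 0 ≤ b) :
    (a + b) ^ p ≤ 2 ^ p * ((a ^ p + b ^ p) / 2) := by
  have hmid := (convexOn_rpow hp).2 (mem_Ici.2 ha) (mem_Ici.2 hb) (by norm_num : (0 : ℝ) ≤ 1 / 2)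
    (by norm_num : (0 : ℝ) ≤ 1 / 2) (by norm_num)
  simp only [smul_eq_mul] at hmid
  calc (a + b) ^ p = 2 ^ p * (1 / 2 * a + 1 / 2 * b) ^ p := by
        rw [← mul_rpow (by norm_num) (by positivity)]; ring_nf
    _ ≤ 2 ^ p * ((a ^ p + b ^ p) / 2) := by
        gcongr
        linarith

theorem abs_sub_rpow_eq {p a b : ℝ} (hp : 0 < p) (ha : 0 ≤ a) (hb : 0 ≤ b) :
    |a - b| ^ p = ((a - b) ^ 2 * (a + b) ^ (p - 2)) ^ (p / 2) * ((a + b) ^ p) ^ (1 - p / 2) := by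
  rcases (add_nonneg ha hb).eq_or_lt with hab | hab
  · obtain ⟨rfl, rfl⟩ : a = 0 ∧ b = 0 := ⟨by linarith, by linarith⟩
    simp [zero_rpow hp.ne', zero_rpow (by positivity : p / 2 ≠ 0)]
  · rw [mul_rpow (sq_nonneg _) (rpow_nonneg hab.le _), ← sq_abs, ← rpow_natCast,
      ← rpow_mul (abs_nonneg _), ← rpow_mul hab.le, ← rpow_mul hab.le, mul_assoc,
      ← rpow_add hab]
    rw [show ((2 : ℕ) : ℝ) * (p / 2) = p by push_cast; ring,
      show (p - 2) * (p / 2) + p * (1 - p / 2) = 0 by ring, rpow_zero, mul_one]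

section HolderDeficit

variable {X : Type*} [MeasurableSpace X] {μ : Measure X} {p : ℝ} {f h : X → ℝ}

theorem rpowBregman_nonneg (hp1 : 1 < p) (hp2 : p ≤ 2) {a b : ℝ} (ha : 0 ≤ a) (hb : 0 ≤ b) :
    0 ≤ rpowBregman p a b :=
  le_trans (mul_nonneg (by linarith) (mul_nonneg (sq_nonneg _) (rpow_nonneg (by positivity) _)))
    (mul_sq_mul_rpow_le_rpowBregman hp1 hp2 ha hb)

-- The Bochner integral of a non-integrable function is `0`, so `f ^ p` is integrable.
theorem aestronglyMeasurable_of_integral_rpow_ne_zero (hp : p ≠ 0) (hf0 : 0 ≤ f)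
    (hf : ∫ x, f x ^ p ∂μ ≠ 0) : AEStronglyMeasurable f μ :=
  ((Integrable.of_integral_ne_zero hf).1.aemeasurable.pow_const p⁻¹).aestronglyMeasurable.congr
    (ae_of_all _ fun x => rpow_rpow_inv (hf0 x) hp)

theorem integrable_add_rpow (hp : 1 ≤ p) (hf0 : 0 ≤ f) (hh0 : 0 ≤ h)
    (hfm : AEStronglyMeasurable f μ) (hhm : AEStronglyMeasurable h μ)
    (hf : Integrable (fun x => f x ^ p) μ) (hh : Integrable (fun x => h x ^ p) μ) :
    Integrable (fun x => (f x + h x) ^ p) μ :=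
  (((hf.add hh).div_const 2).const_mul (2 ^ p)).mono'
    ((hfm.add hhm).aemeasurable.pow_const p).aestronglyMeasurable (ae_of_all _ fun x => by
      rw [Real.norm_of_nonneg (rpow_nonneg (add_nonneg (hf0 x) (hh0 x)) _)]
      exact add_rpow_le_two_rpow_mul hp (hf0 x) (hh0 x))

theorem integral_add_rpow_le (hp : 1 ≤ p) (hf0 : 0 ≤ f) (hh0 : 0 ≤ h)
    (hf : ∫ x, f x ^ p ∂μ = 1) (hh : ∫ x, h x ^ p ∂μ = 1) :
    ∫ x, (f x + h x) ^ p ∂μ ≤ 2 ^ p := by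
  have hfp := Integrable.of_integral_ne_zero (hf ▸ one_ne_zero)
  have hhp := Integrable.of_integral_ne_zero (hh ▸ one_ne_zero)
  calc ∫ x, (f x + h x) ^ p ∂μ ≤ ∫ x, 2 ^ p * ((f x ^ p + h x ^ p) / 2) ∂μ :=
        integral_mono (integrable_add_rpow hp hf0 hh0
          (aestronglyMeasurable_of_integral_rpow_ne_zero (by linarith) hf0 (hf ▸ one_ne_zero))
          (aestronglyMeasurable_of_integral_rpow_ne_zero (by linarith) hh0 (hh ▸ one_ne_zero))
          hfp hhp)
          (((hfp.add hhp).div_const 2).const_mul _)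
          fun x => add_rpow_le_two_rpow_mul hp (hf0 x) (hh0 x)
    _ = 2 ^ p := by
        rw [integral_const_mul, integral_div, integral_add hfp hhp, hf, hh]
        norm_num

variable (hp1 : 1 < p) (hp2 : p ≤ 2) (hf0 : 0 ≤ f) (hh0 : 0 ≤ h)
  (hf : ∫ x, f x ^ p ∂μ = 1) (hh : ∫ x, h x ^ p ∂μ = 1)
include hp1 hp2 hf0 hh0 hf hh

theorem integrable_mul_rpow_sub_one : Integrable (fun x => f x * h x ^ (p - 1)) μ := by
  have hfm := aestronglyMeasurable_of_integral_rpow_ne_zero (μ := μ) (by linarith) hf0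
    (hf ▸ one_ne_zero)
  have hhm := aestronglyMeasurable_of_integral_rpow_ne_zero (μ := μ) (by linarith) hh0
    (hh ▸ one_ne_zero)
  have hfp := Integrable.of_integral_ne_zero (hf ▸ one_ne_zero)
  have hhp := Integrable.of_integral_ne_zero (hh ▸ one_ne_zero)
  refine Integrable.mono' ((hfp.div_const p).add (hhp.const_mul ((p - 1) / p)))
    (hfm.mul (hhm.aemeasurable.pow_const _).aestronglyMeasurable) (ae_of_all _ fun x => ?_)
  rw [Real.norm_of_nonneg (mul_nonneg (hf0 x) (rpow_nonneg (hh0 x) _))]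
  exact sub_nonneg.1 (rpowBregman_nonneg hp1 hp2 (hf0 x) (hh0 x))

theorem integrable_rpowBregman : Integrable (fun x => rpowBregman p (f x) (h x)) μ :=
  (((Integrable.of_integral_ne_zero (hf ▸ one_ne_zero)).div_const p).add
    ((Integrable.of_integral_ne_zero (hh ▸ one_ne_zero)).const_mul ((p - 1) / p))).sub
    (integrable_mul_rpow_sub_one hp1 hp2 hf0 hh0 hf hh)

theorem integral_rpowBregman :
    ∫ x, rpowBregman p (f x) (h x) ∂μ = 1 - ∫ x, f x * h x ^ (p - 1) ∂μ := by
  have hfp := Integrable.of_integral_ne_zero (hf ▸ one_ne_zero)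
  have hhp := Integrable.of_integral_ne_zero (hh ▸ one_ne_zero)
  have hsum : Integrable (fun x => f x ^ p / p + (p - 1) / p * h x ^ p) μ :=
    (hfp.div_const p).add (hhp.const_mul _)
  simp only [rpowBregman]
  rw [integral_sub hsum (integrable_mul_rpow_sub_one hp1 hp2 hf0 hh0 hf hh),
    integral_add (hfp.div_const p) (hhp.const_mul _), integral_div, integral_const_mul, hf, hh]
  field_simp
  ring

theorem integrable_sq_mul_rpow :
    Integrable (fun x => (f x - h x) ^ 2 * (f x + h x) ^ (p - 2)) μ := by
  have hfm := aestronglyMeasurable_of_integral_rpow_ne_zero (μ := μ) (by linarith) hf0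
    (hf ▸ one_ne_zero)
  have hhm := aestronglyMeasurable_of_integral_rpow_ne_zero (μ := μ) (by linarith) hh0
    (hh ▸ one_ne_zero)
  refine Integrable.mono' ((integrable_rpowBregman hp1 hp2 hf0 hh0 hf hh).const_mul
    (2 / (p - 1))) ((((hfm.sub hhm).aemeasurable.pow_const 2).mul
    ((hfm.add hhm).aemeasurable.pow_const _)).aestronglyMeasurable) (ae_of_all _ fun x => ?_)
  have hW0 : 0 ≤ (f x - h x) ^ 2 * (f x + h x) ^ (p - 2) :=
    mul_nonneg (sq_nonneg _) (rpow_nonneg (add_nonneg (hf0 x) (hh0 x)) _)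
  have hp1' : 0 < p - 1 := by linarith
  rw [Real.norm_of_nonneg hW0]
  calc (f x - h x) ^ 2 * (f x + h x) ^ (p - 2)
      = 2 / (p - 1) * ((p - 1) / 2 * ((f x - h x) ^ 2 * (f x + h x) ^ (p - 2))) := by
        field_simp
    _ ≤ 2 / (p - 1) * rpowBregman p (f x) (h x) := by
        gcongr
        exact mul_sq_mul_rpow_le_rpowBregman hp1 hp2 (hf0 x) (hh0 x)

theorem mul_integral_sq_mul_rpow_le :
    (p - 1) / 2 * ∫ x, (f x - h x) ^ 2 * (f x + h x) ^ (p - 2) ∂μ ≤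
      1 - ∫ x, f x * h x ^ (p - 1) ∂μ := by
  rw [← integral_rpowBregman hp1 hp2 hf0 hh0 hf hh, ← integral_const_mul]
  exact integral_mono ((integrable_sq_mul_rpow hp1 hp2 hf0 hh0 hf hh).const_mul _)
    (integrable_rpowBregman hp1 hp2 hf0 hh0 hf hh)
    fun x => mul_sq_mul_rpow_le_rpowBregman hp1 hp2 (hf0 x) (hh0 x)

theorem Lnorm_sub_sq_le_two_mul_integral :
    Lnorm μ p (fun x => f x - h x) ^ 2 ≤
      2 * ∫ x, (f x - h x) ^ 2 * (f x + h x) ^ (p - 2) ∂μ := by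
  have hp0 : 0 < p := by linarith
  have hfm := aestronglyMeasurable_of_integral_rpow_ne_zero (μ := μ) (by linarith) hf0
    (hf ▸ one_ne_zero)
  have hhm := aestronglyMeasurable_of_integral_rpow_ne_zero (μ := μ) (by linarith) hh0
    (hh ▸ one_ne_zero)
  set A := ∫ x, (f x - h x) ^ 2 * (f x + h x) ^ (p - 2) ∂μ
  set B := ∫ x, (f x + h x) ^ p ∂μ
  set S := ∫ x, |f x - h x| ^ p ∂μ
  have hA0 : 0 ≤ A := integral_nonneg fun x =>
    mul_nonneg (sq_nonneg _) (rpow_nonneg (add_nonneg (hf0 x) (hh0 x)) _)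
  have hB0 : 0 ≤ B := integral_nonneg fun x => rpow_nonneg (add_nonneg (hf0 x) (hh0 x)) _
  have hS0 : 0 ≤ S := integral_nonneg fun x => rpow_nonneg (abs_nonneg _) _
  have hB : B ≤ 2 ^ p := integral_add_rpow_le hp1.le hf0 hh0 hf hh
  have hS : S ≤ A ^ (p / 2) * B ^ (1 - p / 2) := by
    rw [show S = _ from integral_congr_ae (ae_of_all _ fun x =>
      abs_sub_rpow_eq hp0 (hf0 x) (hh0 x))]
    exact integral_rpow_mul_rpow_le_s10
      (fun x => mul_nonneg (sq_nonneg _) (rpow_nonneg (add_nonneg (hf0 x) (hh0 x)) _))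
      (fun x => rpow_nonneg (add_nonneg (hf0 x) (hh0 x)) _)
      (integrable_sq_mul_rpow hp1 hp2 hf0 hh0 hf hh)
      (integrable_add_rpow hp1.le hf0 hh0 hfm hhm
        (Integrable.of_integral_ne_zero (hf ▸ one_ne_zero))
        (Integrable.of_integral_ne_zero (hh ▸ one_ne_zero))) (by positivity) (by linarith)
  have hLnorm : Lnorm μ p (fun x => f x - h x) ^ 2 = S ^ (2 / p) := by
    rw [Lnorm, ← rpow_natCast, ← rpow_mul hS0]
    ring_nf
  calc Lnorm μ p (fun x => f x - h x) ^ 2 = S ^ (2 / p) := hLnorm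
    _ ≤ (A ^ (p / 2) * B ^ (1 - p / 2)) ^ (2 / p) := by gcongr
    _ = A * B ^ ((2 - p) / p) := by
        rw [mul_rpow (by positivity) (by positivity), ← rpow_mul hA0, ← rpow_mul hB0,
          show p / 2 * (2 / p) = 1 by field_simp, rpow_one,
          show (1 - p / 2) * (2 / p) = (2 - p) / p by field_simp]
    _ ≤ A * (2 ^ p) ^ ((2 - p) / p) := by gcongr
    _ = A * 2 ^ (2 - p) := by
        rw [← rpow_mul (by norm_num)]
        field_simp
    _ ≤ A * 2 ^ (1 : ℝ) := by gcongr <;> linarith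
    _ = 2 * A := by rw [rpow_one, mul_comm]

theorem mul_Lnorm_sub_sq_le :
    (p - 1) / 4 * Lnorm μ p (fun x => f x - h x) ^ 2 ≤ 1 - ∫ x, f x * h x ^ (p - 1) ∂μ := by
  have hp1' : 0 ≤ p - 1 := by linarith
  calc (p - 1) / 4 * Lnorm μ p (fun x => f x - h x) ^ 2
      ≤ (p - 1) / 4 * (2 * ∫ x, (f x - h x) ^ 2 * (f x + h x) ^ (p - 2) ∂μ) := by
        gcongr
        exact Lnorm_sub_sq_le_two_mul_integral hp1 hp2 hf0 hh0 hf hh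
    _ = (p - 1) / 2 * ∫ x, (f x - h x) ^ 2 * (f x + h x) ^ (p - 2) ∂μ := by ring
    _ ≤ 1 - ∫ x, f x * h x ^ (p - 1) ∂μ := mul_integral_sq_mul_rpow_le hp1 hp2 hf0 hh0 hf hh

end HolderDeficit

theorem Lnorm_rpow {X : Type*} [MeasurableSpace X] (μ : Measure X) {p : ℝ} (hp : p ≠ 0)
    (f : X → ℝ) : Lnorm μ p f ^ p = ∫ x, |f x| ^ p ∂μ := by
  rw [Lnorm, ← rpow_mul (integral_nonneg fun x => rpow_nonneg (abs_nonneg _) _),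
    one_div_mul_cancel hp, rpow_one]

theorem stmt10_general {X : Type*} [MeasurableSpace X] (μ : Measure X) (q : ℝ)
    (hq1 : 2 < q) (hq2 : q < 4) (U ψ : X → ℝ) (hU0 : ∀ x, 0 ≤ U x)
    (hUn : Lnorm μ (q / (q - 2)) U = 1) (hψn : 0 < Lnorm μ q ψ) :
    (Lnorm μ q ψ) ^ 2 - ∫ x, U x * (ψ x) ^ 2 ∂μ ≥
      (q - 2) / 8 * (Lnorm μ q ψ) ^ 2 *
        (Lnorm μ (q / 2)
          (fun x => (ψ x) ^ 2 / (Lnorm μ q ψ) ^ 2 - U x ^ (2 / (q - 2)))) ^ 2 := by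
  set N := Lnorm μ q ψ
  have hq2' : 0 < q - 2 := by linarith
  have hf : ∫ x, (ψ x ^ 2 / N ^ 2) ^ (q / 2) ∂μ = 1 := by
    have hpow : ∀ x, (ψ x ^ 2 / N ^ 2) ^ (q / 2) = |ψ x| ^ q / N ^ q := fun x => by
      rw [div_rpow (sq_nonneg _) (sq_nonneg _), ← sq_abs, ← rpow_natCast, ← rpow_natCast N,
        ← rpow_mul (abs_nonneg _), ← rpow_mul hψn.le, Nat.cast_ofNat,
        mul_div_cancel₀ q two_ne_zero]
    simp_rw [hpow]
    rw [integral_div, ← Lnorm_rpow μ (by linarith) ψ, div_self (by positivity)]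
  have hh : ∫ x, (U x ^ (2 / (q - 2))) ^ (q / 2) ∂μ = 1 := by
    have hpow : ∀ x, (U x ^ (2 / (q - 2))) ^ (q / 2) = |U x| ^ (q / (q - 2)) := fun x => by
      rw [abs_of_nonneg (hU0 x), ← rpow_mul (hU0 x)]
      congr 1
      field_simp
    simp_rw [hpow]
    rw [← Lnorm_rpow μ (by positivity) U, hUn, one_rpow]
  have hU : ∀ x, (U x ^ (2 / (q - 2))) ^ (q / 2 - 1) = U x := fun x => by
    rw [← rpow_mul (hU0 x), show 2 / (q - 2) * (q / 2 - 1) = 1 by field_simp, rpow_one]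
  have hdeficit := mul_Lnorm_sub_sq_le (μ := μ) (by linarith) (by linarith)
    (fun x => div_nonneg (sq_nonneg (ψ x)) (sq_nonneg N)) (fun x => rpow_nonneg (hU0 x) _) hf hh
  simp only [hU] at hdeficit
  have hUψ : ∫ x, U x * ψ x ^ 2 ∂μ = N ^ 2 * ∫ x, ψ x ^ 2 / N ^ 2 * U x ∂μ := by
    rw [← integral_const_mul]
    congr 1 with x
    field_simp
  rw [hUψ, ge_iff_le]
  calc (q - 2) / 8 * N ^ 2 * Lnorm μ (q / 2) (fun x => ψ x ^ 2 / N ^ 2 - U x ^ (2 / (q - 2))) ^ 2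
      = N ^ 2 * ((q / 2 - 1) / 4 *
          Lnorm μ (q / 2) (fun x => ψ x ^ 2 / N ^ 2 - U x ^ (2 / (q - 2))) ^ 2) := by ring
    _ ≤ N ^ 2 * (1 - ∫ x, ψ x ^ 2 / N ^ 2 * U x ∂μ) := by gcongr
    _ = N ^ 2 - N ^ 2 * ∫ x, ψ x ^ 2 / N ^ 2 * U x ∂μ := by ring

/-- Eq. (hlow2): for `2 < q < 4`, `U ≥ 0` with `‖U‖_{q/(q-2)} = 1` and `ψ ∈ L^q` nonzero, the
Hölder remainder `H[ψ,U] = ‖ψ‖_q² − ∫ U ψ²` satisfies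
`H[ψ,U] ≥ ((q-2)/8) ‖ψ‖_q² ‖ |ψ|²/‖ψ‖_q² − U^{2/(q-2)} ‖_{q/2}²`. -/
theorem stmt10 {X : Type*} [MeasurableSpace X] (μ : Measure X) (q : ℝ)
    (hq1 : 2 < q) (hq2 : q < 4) (U ψ : X → ℝ) (hU0 : ∀ x, 0 ≤ U x)
    (hU : MemLp U (ENNReal.ofReal (q / (q - 2))) μ)
    (hψ : MemLp ψ (ENNReal.ofReal q) μ)
    (hUn : Lnorm μ (q / (q - 2)) U = 1) (hψn : 0 < Lnorm μ q ψ) :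
    (Lnorm μ q ψ) ^ 2 - ∫ x, U x * (ψ x) ^ 2 ∂μ ≥
      (q - 2) / 8 * (Lnorm μ q ψ) ^ 2 *
        (Lnorm μ (q / 2)
          (fun x => (ψ x) ^ 2 / (Lnorm μ q ψ) ^ 2 - U x ^ (2 / (q - 2)))) ^ 2 :=
  stmt10_general μ q hq1 hq2 U ψ hU0 hUn hψn
end

section
/- Let q > 2 and let Q ∈ H¹(ℝ^d) be a minimizer of E[ψ] = ∫|∇ψ|² dx − (∫|ψ|^q dx)^{2/q} over {ψ ∈ H¹(ℝ^d) : ∫ψ² dx = 1} (with q < 2d/(d-2) if d ≥ 3). Then Q does not change sign, i.e. either Q ≥ 0 a.e. or Q ≤ 0 a.e. -/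
/-! If `Q` changed sign, split it as `Q = Q₊ - Q₋`. The gradient energies add,
`‖∇Q‖₂² = ‖∇Q₊‖₂² + ‖∇Q₋‖₂²`, while minimality of `Q`, after rescaling to unit mass, gives
`‖Q±‖₂² E[Q] ≤ E[Q±]`. Adding and using `‖Q₊‖₂² + ‖Q₋‖₂² = 1` yields
`E[Q] ≤ ‖∇Q‖₂² - ‖Q₊‖_q² - ‖Q₋‖_q²`, which contradicts the strict subadditivity of `x ↦ x ^ (2 / q)`
applied to `‖Q‖_q^q = ‖Q₊‖_q^q + ‖Q₋‖_q^q`.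

Admissible functions are differentiable here, so `Q₊` is approached by `φ_ε ∘ Q` with `φ_ε` of class
`C¹`, `φ_ε'(t) ∈ [0, 1]` and `φ_ε'(t)² + φ_ε'(-t)² ≤ 1`; the inequality is reached as `ε → 0⁺` by
dominated convergence. -/

open MeasureTheory

variable {d : ℕ}

/-- Membership in `H¹(ℝ^d) ∩ L^q` (with a classical derivative, for simplicity). -/
def InH1 (d : ℕ) (q : ℝ) (ψ : EuclideanSpace ℝ (Fin d) → ℝ) : Prop :=
  MemLp ψ 2 volume ∧ MemLp ψ (ENNReal.ofReal q) volume ∧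
    Differentiable ℝ ψ ∧ MemLp (fun x => ‖fderiv ℝ ψ x‖) 2 volume

/-- The GNS-type energy `E[ψ] = ∫ |∇ψ|² dx − (∫ |ψ|^q dx)^{2/q}`. -/
noncomputable def Efun (d : ℕ) (q : ℝ) (ψ : EuclideanSpace ℝ (Fin d) → ℝ) : ℝ :=
  (∫ x, ‖fderiv ℝ ψ x‖ ^ 2) - (∫ x, |ψ x| ^ q) ^ (2 / q)

open Real Filter Topology

lemma rpow_add_lt_add_rpow {x y p : ℝ} (hx : 0 < x) (hy : 0 < y) (hp : p < 1) :
    (x + y) ^ p < x ^ p + y ^ p := by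
  have hs : 0 < x + y := by linarith
  have hx' : x / (x + y) < (x / (x + y)) ^ p :=
    self_lt_rpow_of_lt_one (div_pos hx hs) ((div_lt_one hs).mpr (by linarith)) hp
  have hy' : y / (x + y) < (y / (x + y)) ^ p :=
    self_lt_rpow_of_lt_one (div_pos hy hs) ((div_lt_one hs).mpr (by linarith)) hp
  have hsum : 1 < (x ^ p + y ^ p) / (x + y) ^ p := by
    rw [add_div, ← div_rpow hx.le hs.le, ← div_rpow hy.le hs.le]
    have : x / (x + y) + y / (x + y) = 1 := by field_simp
    linarith
  rwa [one_lt_div (rpow_pos_of_pos hs p)] at hsum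

lemma abs_rpow_eq_max_rpow_add_max_neg_rpow {p : ℝ} (hp : p ≠ 0) (t : ℝ) :
    |t| ^ p = max t 0 ^ p + max (-t) 0 ^ p := by
  rcases le_total t 0 with ht | ht
  · rw [max_eq_right ht, max_eq_left (neg_nonneg.mpr ht), abs_of_nonpos ht, zero_rpow hp,
      zero_add]
  · rw [max_eq_left ht, max_eq_right (neg_nonpos.mpr ht), abs_of_nonneg ht, zero_rpow hp,
      add_zero]

lemma abs_div_sqrt_sq_add_sq_le_one (t ε : ℝ) : |t / √(t ^ 2 + ε ^ 2)| ≤ 1 := by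
  rw [abs_div, abs_of_nonneg (sqrt_nonneg _)]
  exact div_le_one_of_le₀ (abs_le_sqrt (by nlinarith)) (sqrt_nonneg _)

/-- Regularizes `max t 0 = (|t| + t) / 2` by replacing `|t|` with `√(t ^ 2 + ε ^ 2) - ε`. -/
noncomputable def smoothPos (ε t : ℝ) : ℝ := (√(t ^ 2 + ε ^ 2) + t - ε) / 2

noncomputable def smoothPosDeriv (ε t : ℝ) : ℝ := (t / √(t ^ 2 + ε ^ 2) + 1) / 2

lemma hasDerivAt_smoothPos {ε : ℝ} (hε : ε ≠ 0) (t : ℝ) :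
    HasDerivAt (smoothPos ε) (smoothPosDeriv ε t) t := by
  have hpos : 0 < t ^ 2 + ε ^ 2 := by positivity
  have h := ((((hasDerivAt_pow 2 t).add_const (ε ^ 2)).sqrt hpos.ne').add
    (hasDerivAt_id' t)).sub_const ε |>.div_const 2
  refine h.congr_deriv ?_
  have := (sqrt_pos.mpr hpos).ne'
  rw [smoothPosDeriv]
  field_simp
  ring

lemma abs_smoothPosDeriv_le_one (ε t : ℝ) : |smoothPosDeriv ε t| ≤ 1 := by
  have := abs_le.mp (abs_div_sqrt_sq_add_sq_le_one t ε)
  rw [smoothPosDeriv, abs_le]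
  constructor <;> linarith

lemma smoothPosDeriv_sq_add_sq_neg_le_one (ε t : ℝ) :
    smoothPosDeriv ε t ^ 2 + smoothPosDeriv ε (-t) ^ 2 ≤ 1 := by
  have h := abs_le.mp (abs_div_sqrt_sq_add_sq_le_one t ε)
  simp only [smoothPosDeriv, neg_sq, neg_div]
  nlinarith

lemma abs_smoothPos_le {ε : ℝ} (hε : 0 ≤ ε) (t : ℝ) : |smoothPos ε t| ≤ |t| := by
  have hlow : ε ≤ √(t ^ 2 + ε ^ 2) := le_sqrt_of_sq_le (by nlinarith)
  have hup : √(t ^ 2 + ε ^ 2) ≤ |t| + ε :=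
    sqrt_le_iff.mpr ⟨by positivity, by nlinarith [sq_abs t, abs_nonneg t]⟩
  rw [smoothPos, abs_le]
  constructor <;> cases abs_cases t <;> linarith

lemma continuous_smoothPos (ε : ℝ) : Continuous (smoothPos ε) := by
  unfold smoothPos
  fun_prop

lemma tendsto_smoothPos (t : ℝ) :
    Tendsto (fun ε => smoothPos ε t) (𝓝 0) (𝓝 (max t 0)) := by
  have hc : Continuous fun ε => smoothPos ε t := by
    unfold smoothPos
    fun_prop
  have h0 : smoothPos 0 t = max t 0 := by
    rw [smoothPos, zero_pow two_ne_zero, add_zero, sqrt_sq_eq_abs, sub_zero]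
    cases le_total t 0 <;> simp [*, abs_of_nonpos, abs_of_nonneg]
  exact h0 ▸ hc.tendsto 0

section Integrals

variable {α : Type*} [MeasurableSpace α] {μ : Measure α} {f : α → ℝ} {p : ℝ}

lemma MeasureTheory.MemLp.integrable_abs_rpow (hp : 0 < p) (hf : MemLp f (ENNReal.ofReal p) μ) :
    Integrable (fun x => |f x| ^ p) μ := by
  simpa [ENNReal.toReal_ofReal hp.le] using
    hf.integrable_norm_rpow (by simpa using hp) ENNReal.ofReal_ne_top

lemma integrable_max_zero_rpow (hp : 0 < p) (hf : MemLp f (ENNReal.ofReal p) μ) :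
    Integrable (fun x => max (f x) 0 ^ p) μ := by
  simpa [abs_of_nonneg] using hf.pos_part.integrable_abs_rpow hp

lemma integral_abs_rpow_eq_add (hp : 0 < p) (hf : MemLp f (ENNReal.ofReal p) μ) :
    ∫ x, |f x| ^ p ∂μ = ∫ x, max (f x) 0 ^ p ∂μ + ∫ x, max (-f x) 0 ^ p ∂μ := by
  refine Eq.trans ?_ (integral_add (integrable_max_zero_rpow hp hf)
    (integrable_max_zero_rpow hp hf.neg))
  simp_rw [abs_rpow_eq_max_rpow_add_max_neg_rpow hp.ne']

lemma integral_max_zero_rpow_pos (hp : 0 < p) (hf : MemLp f (ENNReal.ofReal p) μ)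
    (h : ¬ ∀ᵐ x ∂μ, f x ≤ 0) : 0 < ∫ x, max (f x) 0 ^ p ∂μ := by
  rw [integral_pos_iff_support_of_nonneg (fun x => by positivity)
    (integrable_max_zero_rpow hp hf)]
  have hsupp : Function.support (fun x => max (f x) 0 ^ p) = {x | 0 < f x} := by
    ext x
    simp [hp.ne']
  rw [hsupp, pos_iff_ne_zero]
  simpa [ae_iff] using h

lemma tendsto_integral_abs_smoothPos_rpow (hp : 0 < p) (hf : MemLp f (ENNReal.ofReal p) μ) :
    Tendsto (fun ε => ∫ x, |smoothPos ε (f x)| ^ p ∂μ) (𝓝[>] 0)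
      (𝓝 (∫ x, max (f x) 0 ^ p ∂μ)) := by
  refine tendsto_integral_filter_of_dominated_convergence (fun x => |f x| ^ p)
    (Eventually.of_forall fun ε => ?_) ?_ (hf.integrable_abs_rpow hp) (ae_of_all _ fun x => ?_)
  · exact (((continuous_smoothPos ε).abs.rpow_const fun _ => Or.inr hp.le).comp_aestronglyMeasurable
      hf.aestronglyMeasurable)
  · filter_upwards [self_mem_nhdsWithin] with ε hε
    refine ae_of_all _ fun x => ?_
    rw [norm_of_nonneg (by positivity)]
    exact rpow_le_rpow (abs_nonneg _) (abs_smoothPos_le hε.le _) hp.le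
  · have h := (tendsto_smoothPos (f x)).mono_left (nhdsWithin_le_nhds (s := Set.Ioi 0))
    have := h.abs.rpow_const (p := p) (Or.inr hp.le)
    rwa [abs_of_nonneg (le_max_right _ _)] at this

end Integrals

section Gradient

variable {E : Type*} [NormedAddCommGroup E] [NormedSpace ℝ E]

lemma norm_fderiv_comp_of_hasDerivAt {φ φ' : ℝ → ℝ} {ψ : E → ℝ}
    (hφ : ∀ t, HasDerivAt φ (φ' t) t) (hψ : Differentiable ℝ ψ) (x : E) :
    ‖fderiv ℝ (fun y => φ (ψ y)) x‖ = |φ' (ψ x)| * ‖fderiv ℝ ψ x‖ := by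
  have h : HasFDerivAt (fun y => φ (ψ y)) (φ' (ψ x) • fderiv ℝ ψ x) x :=
    (hφ (ψ x)).comp_hasFDerivAt x (hψ x).hasFDerivAt
  rw [h.fderiv, norm_smul, norm_eq_abs]

lemma norm_fderiv_smoothPos_sq_add_le {ψ : E → ℝ} (hψ : Differentiable ℝ ψ) {ε : ℝ}
    (hε : ε ≠ 0) (x : E) :
    ‖fderiv ℝ (fun y => smoothPos ε (ψ y)) x‖ ^ 2
        + ‖fderiv ℝ (fun y => smoothPos ε (-ψ y)) x‖ ^ 2 ≤ ‖fderiv ℝ ψ x‖ ^ 2 := by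
  rw [norm_fderiv_comp_of_hasDerivAt (hasDerivAt_smoothPos hε) hψ,
    norm_fderiv_comp_of_hasDerivAt (ψ := fun y => -ψ y) (hasDerivAt_smoothPos hε) hψ.neg,
    fderiv_fun_neg, norm_neg, mul_pow, mul_pow, sq_abs, sq_abs, ← add_mul]
  exact mul_le_of_le_one_left (sq_nonneg _) (smoothPosDeriv_sq_add_sq_neg_le_one ε (ψ x))

end Gradient

section H1

variable {q : ℝ}

lemma InH1.comp {ψ : EuclideanSpace ℝ (Fin d) → ℝ} {φ φ' : ℝ → ℝ} (K : ℝ) (hψ : InH1 d q ψ)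
    (hφ : ∀ t, HasDerivAt φ (φ' t) t) (hφK : ∀ t, |φ t| ≤ K * |t|) (hφ'K : ∀ t, |φ' t| ≤ K) :
    InH1 d q (fun x => φ (ψ x)) := by
  obtain ⟨h2, hq, hdiff, hgrad⟩ := hψ
  have hφc : Continuous φ := continuous_iff_continuousAt.mpr fun t => (hφ t).continuousAt
  have hmeas := (hφc.comp hdiff.continuous).aestronglyMeasurable (μ := volume)
  have hbound : ∀ᵐ x, ‖φ (ψ x)‖ ≤ K * ‖ψ x‖ := ae_of_all _ fun x => hφK (ψ x)
  refine ⟨h2.of_le_mul hmeas hbound, hq.of_le_mul hmeas hbound,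
    fun x => ((hφ (ψ x)).comp_hasFDerivAt x (hdiff x).hasFDerivAt).differentiableAt,
    hgrad.of_le_mul (c := K) (measurable_fderiv ℝ _).norm.aestronglyMeasurable
      (ae_of_all _ fun x => ?_)⟩
  rw [norm_norm, norm_norm, norm_fderiv_comp_of_hasDerivAt hφ hdiff]
  exact mul_le_mul_of_nonneg_right (hφ'K _) (norm_nonneg _)

lemma InH1.const_mul {ψ : EuclideanSpace ℝ (Fin d) → ℝ} (hψ : InH1 d q ψ) (c : ℝ) :
    InH1 d q (fun x => c * ψ x) :=
  hψ.comp |c| (fun t => by simpa using (hasDerivAt_id t).const_mul c)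
    (fun t => (abs_mul c t).le) (fun _ => le_rfl)

lemma InH1.neg {ψ : EuclideanSpace ℝ (Fin d) → ℝ} (hψ : InH1 d q ψ) :
    InH1 d q (fun x => -ψ x) := by
  simpa using hψ.const_mul (-1)

lemma InH1.smoothPos {ψ : EuclideanSpace ℝ (Fin d) → ℝ} (hψ : InH1 d q ψ) {ε : ℝ}
    (hε : 0 < ε) : InH1 d q (fun x => smoothPos ε (ψ x)) :=
  hψ.comp 1 (hasDerivAt_smoothPos hε.ne') (fun t => by simpa using abs_smoothPos_le hε.le t)
    (abs_smoothPosDeriv_le_one ε)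

lemma Efun_const_mul (hq : q ≠ 0) {ψ : EuclideanSpace ℝ (Fin d) → ℝ} (hψ : Differentiable ℝ ψ)
    (c : ℝ) : Efun d q (fun x => c * ψ x) = c ^ 2 * Efun d q ψ := by
  have hderiv : ∀ t, HasDerivAt (fun t => c * t) c t := fun t => by
    simpa using (hasDerivAt_id t).const_mul c
  have hgrad : ∫ x, ‖fderiv ℝ (fun y => c * ψ y) x‖ ^ 2 = c ^ 2 * ∫ x, ‖fderiv ℝ ψ x‖ ^ 2 := by
    simp_rw [norm_fderiv_comp_of_hasDerivAt hderiv hψ, mul_pow, sq_abs]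
    exact integral_const_mul _ _
  have hpow : ∫ x, |c * ψ x| ^ q = |c| ^ q * ∫ x, |ψ x| ^ q := by
    simp_rw [abs_mul, mul_rpow (abs_nonneg c) (abs_nonneg _)]
    exact integral_const_mul _ _
  have hc : (|c| ^ q) ^ (2 / q) = c ^ 2 := by
    rw [← rpow_mul (abs_nonneg c), mul_div_cancel₀ _ hq, rpow_two, sq_abs]
  rw [Efun, Efun, hgrad, hpow, mul_rpow (by positivity) (integral_nonneg fun _ => by positivity),
    hc, mul_sub]

end H1

section Minimizer

variable {q : ℝ} {Q : EuclideanSpace ℝ (Fin d) → ℝ}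

lemma integral_sq_mul_Efun_le_Efun (hq : 0 < q)
    (hmin : ∀ ψ : EuclideanSpace ℝ (Fin d) → ℝ,
      InH1 d q ψ → (∫ x, (ψ x) ^ 2) = 1 → Efun d q Q ≤ Efun d q ψ)
    {w : EuclideanSpace ℝ (Fin d) → ℝ} (hw : InH1 d q w) :
    (∫ x, (w x) ^ 2) * Efun d q Q ≤ Efun d q w := by
  have hsq_nonneg : 0 ≤ fun x => w x ^ 2 := fun x => sq_nonneg (w x)
  rcases (integral_nonneg hsq_nonneg).eq_or_lt with hzero | hpos
  · have hw0 : ∀ᵐ x, w x = 0 := by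
      filter_upwards [(integral_eq_zero_iff_of_nonneg hsq_nonneg hw.1.integrable_sq).mp
        hzero.symm] with x hx
      exact pow_eq_zero_iff two_ne_zero |>.mp hx
    have hq0 : ∫ x, |w x| ^ q = 0 := integral_eq_zero_of_ae <| by
      filter_upwards [hw0] with x hx
      simp [hx, zero_rpow (by positivity : q ≠ 0)]
    rw [← hzero, zero_mul, Efun, hq0, zero_rpow (by positivity), sub_zero]
    exact integral_nonneg fun _ => by positivity
  · set c := (√(∫ x, (w x) ^ 2))⁻¹
    have hc : c ^ 2 * ∫ x, (w x) ^ 2 = 1 := by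
      rw [inv_pow, sq_sqrt hpos.le, inv_mul_cancel₀ hpos.ne']
    have hunit : ∫ x, (c * w x) ^ 2 = 1 := by
      simp_rw [mul_pow]
      rw [integral_const_mul, hc]
    have h := hmin _ (hw.const_mul c) hunit
    rw [Efun_const_mul (by positivity) hw.2.2.1] at h
    calc (∫ x, (w x) ^ 2) * Efun d q Q
        ≤ (∫ x, (w x) ^ 2) * (c ^ 2 * Efun d q w) := mul_le_mul_of_nonneg_left h hpos.le
      _ = Efun d q w := by rw [← mul_assoc, mul_comm _ (c ^ 2), hc, one_mul]

lemma integral_sq_smoothPos_add_mul_Efun_le (hq : 0 < q) (hQ : InH1 d q Q)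
    (hmin : ∀ ψ : EuclideanSpace ℝ (Fin d) → ℝ,
      InH1 d q ψ → (∫ x, (ψ x) ^ 2) = 1 → Efun d q Q ≤ Efun d q ψ) {ε : ℝ} (hε : 0 < ε) :
    ((∫ x, smoothPos ε (Q x) ^ 2) + ∫ x, smoothPos ε (-Q x) ^ 2) * Efun d q Q ≤
      (∫ x, ‖fderiv ℝ Q x‖ ^ 2) - (∫ x, |smoothPos ε (Q x)| ^ q) ^ (2 / q)
        - (∫ x, |smoothPos ε (-Q x)| ^ q) ^ (2 / q) := by
  have hu := hQ.smoothPos hε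
  have hv := hQ.neg.smoothPos hε
  have hgrad : (∫ x, ‖fderiv ℝ (fun y => smoothPos ε (Q y)) x‖ ^ 2)
      + (∫ x, ‖fderiv ℝ (fun y => smoothPos ε (-Q y)) x‖ ^ 2) ≤ ∫ x, ‖fderiv ℝ Q x‖ ^ 2 := by
    rw [← integral_add hu.2.2.2.integrable_sq hv.2.2.2.integrable_sq]
    exact integral_mono (hu.2.2.2.integrable_sq.add hv.2.2.2.integrable_sq)
      hQ.2.2.2.integrable_sq (norm_fderiv_smoothPos_sq_add_le hQ.2.2.1 hε.ne')
  have hEu := integral_sq_mul_Efun_le_Efun hq hmin hu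
  have hEv := integral_sq_mul_Efun_le_Efun hq hmin hv
  unfold Efun at hEu hEv ⊢
  linarith

lemma Efun_le_sub_rpow_max_zero (hq : 0 < q) (hQ : InH1 d q Q)
    (hQn : ∫ x, (Q x) ^ 2 = 1)
    (hmin : ∀ ψ : EuclideanSpace ℝ (Fin d) → ℝ,
      InH1 d q ψ → (∫ x, (ψ x) ^ 2) = 1 → Efun d q Q ≤ Efun d q ψ) :
    Efun d q Q ≤ (∫ x, ‖fderiv ℝ Q x‖ ^ 2) - (∫ x, max (Q x) 0 ^ q) ^ (2 / q)
      - (∫ x, max (-Q x) 0 ^ q) ^ (2 / q) := by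
  have hQ2 : MemLp Q (ENNReal.ofReal 2) volume := by simpa using hQ.1
  have hmass : (∫ x, max (Q x) 0 ^ 2) + ∫ x, max (-Q x) 0 ^ 2 = 1 := by
    simpa [rpow_two, hQn] using (integral_abs_rpow_eq_add two_pos hQ2).symm
  have hL : Tendsto (fun ε => ((∫ x, smoothPos ε (Q x) ^ 2) + ∫ x, smoothPos ε (-Q x) ^ 2)
      * Efun d q Q) (𝓝[>] 0) (𝓝 (Efun d q Q)) := by
    have h := ((tendsto_integral_abs_smoothPos_rpow two_pos hQ2).add
      (tendsto_integral_abs_smoothPos_rpow two_pos hQ2.neg)).mul_const (Efun d q Q)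
    simpa [rpow_two, hmass] using h
  have hR := (tendsto_const_nhds (x := ∫ x, ‖fderiv ℝ Q x‖ ^ 2)).sub
    ((tendsto_integral_abs_smoothPos_rpow hq hQ.2.1).rpow_const (p := 2 / q)
      (Or.inr (by positivity)))
    |>.sub ((tendsto_integral_abs_smoothPos_rpow hq hQ.neg.2.1).rpow_const
      (p := 2 / q) (Or.inr (by positivity)))
  exact le_of_tendsto_of_tendsto hL hR <| eventually_mem_nhdsWithin.mono fun ε hε =>
    integral_sq_smoothPos_add_mul_Efun_le hq hQ hmin hε

end Minimizer

theorem stmt12_general (q : ℝ) (hq : 2 < q)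
    (Q : EuclideanSpace ℝ (Fin d) → ℝ) (hQ : InH1 d q Q)
    (hQn : ∫ x, (Q x) ^ 2 = 1)
    (hmin : ∀ ψ : EuclideanSpace ℝ (Fin d) → ℝ,
      InH1 d q ψ → (∫ x, (ψ x) ^ 2) = 1 → Efun d q Q ≤ Efun d q ψ) :
    (∀ᵐ x, 0 ≤ Q x) ∨ (∀ᵐ x, Q x ≤ 0) := by
  have hq0 : 0 < q := by linarith
  by_contra h
  obtain ⟨hneg, hpos⟩ := not_or.mp h
  have hP := integral_max_zero_rpow_pos hq0 hQ.2.1 hpos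
  have hN := integral_max_zero_rpow_pos hq0 hQ.neg.2.1 (by simpa using hneg)
  have hsplit := Efun_le_sub_rpow_max_zero hq0 hQ hQn hmin
  have hsub := rpow_add_lt_add_rpow hP hN ((div_lt_one hq0).mpr hq)
  rw [Efun, integral_abs_rpow_eq_add hq0 hQ.2.1] at hsplit
  linarith

/-- A minimizer of `E` over the unit sphere of `L²(ℝ^d)` does not change sign. -/
theorem stmt12 (q : ℝ) (hq : 2 < q) (hq' : 3 ≤ d → q < 2 * d / (d - 2))
    (Q : EuclideanSpace ℝ (Fin d) → ℝ) (hQ : InH1 d q Q)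
    (hQn : ∫ x, (Q x) ^ 2 = 1)
    (hmin : ∀ ψ : EuclideanSpace ℝ (Fin d) → ℝ,
      InH1 d q ψ → (∫ x, (ψ x) ^ 2) = 1 → Efun d q Q ≤ Efun d q ψ) :
    (∀ᵐ x, 0 ≤ Q x) ∨ (∀ᵐ x, Q x ≤ 0) :=
  stmt12_general q hq Q hQ hQn hmin
end

section
/- Let 1 ≤ p < q < r ≤ ∞ and suppose (ψ_n) is a sequence of measurable functions on ℝ^d with ‖ψ_n‖_p ≤ A, ‖ψ_n‖_r ≤ A, and ‖ψ_n‖_q ≥ a > 0 for all n. Then there exist ε > 0 and δ > 0, depending only on p, q, r, a, A, such that |{x : |ψ_n(x)| > ε}| ≥ δ for all n. -/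
open MeasureTheory ENNReal

/-!
Cut `f` at a level `ε`. Where `‖f‖ ≤ ε` one has `‖f‖^q ≤ ε^(q-p) ‖f‖^p`, so that part of `f` has
`L^q` norm at most `A^(p/q) ε^(1-p/q)`, which is below `a/2` once `ε` is small. The rest of the
`L^q` norm, at least `a/2`, lives on `S = {ε < ‖f‖}`, where Hölder bounds it by
`A μ(S)^(1/q - 1/r)`; this forces `μ(S)` above a threshold `δ` depending only on the data.
-/

theorem ENNReal.exists_pos_forall_lt_mul_rpow_lt {C : ℝ≥0∞} (hC : C ≠ ⊤) {θ : ℝ} (hθ : 0 < θ)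
    {c : ℝ≥0∞} (hc : 0 < c) : ∃ δ > 0, ∀ t < δ, C * t ^ θ < c := by
  have hlim : Filter.Tendsto (fun t : ℝ≥0∞ => C * t ^ θ) (nhds 0) (nhds 0) := by
    simpa [ENNReal.zero_rpow_of_pos hθ] using
      ENNReal.Tendsto.const_mul ((ENNReal.continuous_rpow_const (y := θ)).tendsto 0) (Or.inr hC)
  simpa using nhds_bot_basis.eventually_iff.mp (hlim.eventually (gt_mem_nhds hc))

section

variable {α E : Type*} [MeasurableSpace α] {μ : Measure α} [NormedAddCommGroup E] {f : α → E}

theorem eLpNorm_le_eLpNorm_rpow_mul_rpow_of_ae_enorm_le {p q : ℝ≥0∞} (hp : p ≠ 0) (hpq : p ≤ q)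
    (hq : q ≠ ⊤) {C : ℝ≥0∞} (hC : C ≠ ⊤) (hf : ∀ᵐ x ∂μ, ‖f x‖ₑ ≤ C) :
    eLpNorm f q μ ≤ eLpNorm f p μ ^ (p.toReal / q.toReal) * C ^ (1 - p.toReal / q.toReal) := by
  have hp_top : p ≠ ⊤ := ne_top_of_le_ne_top hq hpq
  have hP : 0 < p.toReal := ENNReal.toReal_pos hp hp_top
  have hPQ : p.toReal ≤ q.toReal := ENNReal.toReal_mono hq hpq
  have hQ : 0 < q.toReal := hP.trans_le hPQ
  have hpointwise :
      ∀ᵐ x ∂μ, ‖f x‖ₑ ^ q.toReal ≤ C ^ (q.toReal - p.toReal) * ‖f x‖ₑ ^ p.toReal := by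
    filter_upwards [hf] with x hx
    calc ‖f x‖ₑ ^ q.toReal = ‖f x‖ₑ ^ (q.toReal - p.toReal) * ‖f x‖ₑ ^ p.toReal := by
          rw [← ENNReal.rpow_add_of_nonneg _ _ (sub_nonneg.mpr hPQ) hP.le, sub_add_cancel]
      _ ≤ C ^ (q.toReal - p.toReal) * ‖f x‖ₑ ^ p.toReal := by gcongr
  rw [eLpNorm_eq_lintegral_rpow_enorm_toReal (hp.bot_lt.trans_le hpq).ne' hq,
    eLpNorm_eq_lintegral_rpow_enorm_toReal hp hp_top]
  calc (∫⁻ x, ‖f x‖ₑ ^ q.toReal ∂μ) ^ (1 / q.toReal)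
      ≤ (C ^ (q.toReal - p.toReal) * ∫⁻ x, ‖f x‖ₑ ^ p.toReal ∂μ) ^ (1 / q.toReal) := by
        rw [← lintegral_const_mul' _ _ (ENNReal.rpow_ne_top_of_nonneg (sub_nonneg.mpr hPQ) hC)]
        gcongr ?_ ^ _
        exact lintegral_mono_ae hpointwise
    _ = _ := by
        rw [ENNReal.mul_rpow_of_nonneg _ _ (by positivity), ← ENNReal.rpow_mul, ← ENNReal.rpow_mul,
          mul_comm]
        congr 2 <;> field_simp

theorem eLpNorm_indicator_le_eLpNorm_mul_rpow_measure {p q : ℝ≥0∞} (hpq : p ≤ q) {s : Set α}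
    (hs : MeasurableSet s) (hf : AEStronglyMeasurable f μ) :
    eLpNorm (s.indicator f) p μ ≤ eLpNorm f q μ * μ s ^ (1 / p.toReal - 1 / q.toReal) := by
  rw [eLpNorm_indicator_eq_eLpNorm_restrict hs]
  calc eLpNorm f p (μ.restrict s)
      ≤ eLpNorm f q (μ.restrict s) * μ.restrict s Set.univ ^ (1 / p.toReal - 1 / q.toReal) :=
        eLpNorm_le_eLpNorm_mul_rpow_measure_univ (f := f) hpq hf.restrict
    _ ≤ eLpNorm f q μ * μ s ^ (1 / p.toReal - 1 / q.toReal) := by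
        rw [Measure.restrict_apply_univ]
        gcongr
        exact Measure.restrict_le_self

theorem eLpNorm_le_eLpNorm_mul_measure_lt_norm_rpow_add {p q r : ℝ≥0∞} (hp : p ≠ 0)
    (hq : 1 ≤ q) (hpq : p ≤ q) (hqr : q ≤ r) (hq_top : q ≠ ⊤) (hf : AEStronglyMeasurable f μ)
    (ε : ℝ) :
    eLpNorm f q μ ≤ eLpNorm f r μ * μ {x | ε < ‖f x‖} ^ (1 / q.toReal - 1 / r.toReal) +
      eLpNorm f p μ ^ (p.toReal / q.toReal) * ENNReal.ofReal ε ^ (1 - p.toReal / q.toReal) := by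
  wlog hfm : StronglyMeasurable f generalizing f
  · have hlevel : μ {x | ε < ‖f x‖} = μ {x | ε < ‖hf.mk f x‖} := by
      refine measure_congr ?_
      filter_upwards [hf.ae_eq_mk] with x hx
      change (ε < ‖f x‖) = (ε < ‖hf.mk f x‖)
      rw [hx]
    simpa only [eLpNorm_congr_ae hf.ae_eq_mk, hlevel] using
      this hf.stronglyMeasurable_mk.aestronglyMeasurable hf.stronglyMeasurable_mk
  set S := {x | ε < ‖f x‖}
  have hS : MeasurableSet S := measurableSet_lt measurable_const hfm.norm.measurable
  have hsmall : ∀ x, ‖Sᶜ.indicator f x‖ₑ ≤ ENNReal.ofReal ε := by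
    intro x
    by_cases hx : x ∈ S
    · simp [hx]
    · rw [Set.indicator_of_mem hx, ← ofReal_norm]
      exact ENNReal.ofReal_le_ofReal (not_lt.mp hx)
  calc eLpNorm f q μ = eLpNorm (S.indicator f + Sᶜ.indicator f) q μ := by
        rw [Set.indicator_self_add_compl]
    _ ≤ eLpNorm (S.indicator f) q μ + eLpNorm (Sᶜ.indicator f) q μ :=
        eLpNorm_add_le (hf.indicator hS) (hf.indicator hS.compl) hq
    _ ≤ _ := by
        gcongr
        · exact eLpNorm_indicator_le_eLpNorm_mul_rpow_measure hqr hS hf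
        · refine (eLpNorm_le_eLpNorm_rpow_mul_rpow_of_ae_enorm_le hp hpq hq_top ofReal_ne_top
            (ae_of_all _ hsmall)).trans ?_
          gcongr
          exact eLpNorm_indicator_le f

variable (μ) in
theorem exists_pos_forall_le_measure_lt_norm_of_eLpNorm_bounds {p q r : ℝ≥0∞} (hp : p ≠ 0)
    (hq : 1 ≤ q) (hpq : p < q) (hqr : q < r) {A a : ℝ≥0∞} (hA : A ≠ ⊤) (ha : 0 < a) :
    ∃ ε > (0 : ℝ), ∃ δ > (0 : ℝ≥0∞), ∀ f : α → E, AEStronglyMeasurable f μ →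
      eLpNorm f p μ ≤ A → eLpNorm f r μ ≤ A → a ≤ eLpNorm f q μ → δ ≤ μ {x | ε < ‖f x‖} := by
  have hq_top : q ≠ ⊤ := hqr.ne_top
  have hs : p.toReal / q.toReal < 1 :=
    (div_lt_one (ENNReal.toReal_pos (hp.bot_lt.trans hpq).ne' hq_top)).mpr
      (ENNReal.toReal_strict_mono hq_top hpq)
  have hθ : 0 < 1 / q.toReal - 1 / r.toReal := by
    rw [sub_pos, one_div, one_div, ← ENNReal.toReal_inv, ← ENNReal.toReal_inv]
    exact ENNReal.toReal_strict_mono (ENNReal.inv_ne_top.mpr (hp.bot_lt.trans hpq).ne')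
      (ENNReal.inv_lt_inv.mpr hqr)
  have ha2 : 0 < a / 2 := ENNReal.half_pos ha.ne'
  obtain ⟨η, hη, hε_small⟩ := ENNReal.exists_pos_forall_lt_mul_rpow_lt
    (ENNReal.rpow_ne_top_of_nonneg (y := p.toReal / q.toReal) (by positivity) hA)
    (sub_pos.mpr hs) ha2
  obtain ⟨ε, -, hε, hεη⟩ := ENNReal.lt_iff_exists_real_btwn.mp hη
  obtain ⟨δ, hδ, hδ_small⟩ := ENNReal.exists_pos_forall_lt_mul_rpow_lt hA hθ ha2
  refine ⟨ε, ENNReal.ofReal_pos.mp hε, δ, hδ, fun f hf hfp hfr hfq => ?_⟩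
  by_contra! hlevel
  refine (hfq.trans (eLpNorm_le_eLpNorm_mul_measure_lt_norm_rpow_add hp hq hpq.le hqr.le hq_top
    hf ε)).not_gt ?_
  calc _ ≤ A * μ {x | ε < ‖f x‖} ^ (1 / q.toReal - 1 / r.toReal) +
        A ^ (p.toReal / q.toReal) * ENNReal.ofReal ε ^ (1 - p.toReal / q.toReal) := by
        gcongr
    _ < a / 2 + a / 2 := ENNReal.add_lt_add (hδ_small _ hlevel) (hε_small _ hεη)
    _ = a := ENNReal.add_halves a

end

/-- The `pqr`-theorem: if a sequence of measurable functions on `ℝ^d` is uniformly bounded in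
`L^p` and `L^r` and uniformly bounded below in an intermediate `L^q` norm, then the measures of
its superlevel sets are uniformly bounded below. -/
theorem stmt14 {d : ℕ} (p q r : ℝ≥0∞) (hp : 1 ≤ p) (hpq : p < q) (hqr : q < r)
    (A a : ℝ≥0∞) (hA : A ≠ ⊤) (ha : 0 < a)
    (ψ : ℕ → EuclideanSpace ℝ (Fin d) → ℝ)
    (hmeas : ∀ n, AEStronglyMeasurable (ψ n) volume)
    (hp' : ∀ n, eLpNorm (ψ n) p volume ≤ A)
    (hr' : ∀ n, eLpNorm (ψ n) r volume ≤ A)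
    (hq' : ∀ n, a ≤ eLpNorm (ψ n) q volume) :
    ∃ ε > (0 : ℝ), ∃ δ > (0 : ℝ≥0∞), ∀ n,
      δ ≤ volume {x | ε < |ψ n x|} := by
  obtain ⟨ε, hε, δ, hδ, hlevel⟩ := exists_pos_forall_le_measure_lt_norm_of_eLpNorm_bounds
    (volume : Measure (EuclideanSpace ℝ (Fin d))) (E := ℝ) (one_pos.trans_le hp).ne'
    (hp.trans hpq.le) hpq hqr hA ha
  exact ⟨ε, hε, δ, hδ, fun n => hlevel (ψ n) (hmeas n) (hp' n) (hr' n) (hq' n)⟩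
end
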